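/- arXiv:2510.07805 — 9 statements merged into one kernel-verified Lean document; each statement's English description precedes it below -/
import Mathlib

section
/- For every local commutative ring A, the group SL₂(A) is generated by the set of upper unipotent matrices [[1,b],[0,1]] (b ∈ A) together with the set of lower unipotent matrices [[1,0],[c,1]] (c ∈ A). -/
open Matrix

/-- The set of A-points of the upper unipotent radical of `SL₂`. -/
def upperUnipotent (A : Type*) [CommRing A] :
    Set (Matrix.SpecialLinearGroup (Fin 2) A) :=
  {M | ∃ b : A, (M : Matrix (Fin 2) (Fin 2) A) = !![1, b; 0, 1]}

/-- The set of A-points of the lower unipotent radical of `SL₂`. -/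
def lowerUnipotent (A : Type*) [CommRing A] :
    Set (Matrix.SpecialLinearGroup (Fin 2) A) :=
  {M | ∃ c : A, (M : Matrix (Fin 2) (Fin 2) A) = !![1, 0; c, 1]}

noncomputable section

private def Um {A : Type*} [CommRing A] (b : A) : Matrix.SpecialLinearGroup (Fin 2) A :=
  ⟨!![1, b; 0, 1], by simp [Matrix.det_fin_two_of]⟩

private def Lm {A : Type*} [CommRing A] (c : A) : Matrix.SpecialLinearGroup (Fin 2) A :=
  ⟨!![1, 0; c, 1], by simp [Matrix.det_fin_two_of]⟩

private lemma Um_mem {A : Type*} [CommRing A] (b : A) :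
    Um b ∈ Subgroup.closure (upperUnipotent A ∪ lowerUnipotent A) :=
  Subgroup.subset_closure (Or.inl ⟨b, rfl⟩)

private lemma Lm_mem {A : Type*} [CommRing A] (c : A) :
    Lm c ∈ Subgroup.closure (upperUnipotent A ∪ lowerUnipotent A) :=
  Subgroup.subset_closure (Or.inr ⟨c, rfl⟩)

private lemma mem_of_unit {A : Type*} [CommRing A] (M : Matrix.SpecialLinearGroup (Fin 2) A)
    (hc : IsUnit ((M : Matrix (Fin 2) (Fin 2) A) 1 0)) :
    M ∈ Subgroup.closure (upperUnipotent A ∪ lowerUnipotent A) := by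
  obtain ⟨e, he⟩ := hc.exists_right_inv
  have hdet := M.2
  rw [Matrix.det_fin_two] at hdet
  have key : M = Um (((M : Matrix (Fin 2) (Fin 2) A) 0 0 - 1) * e) *
      Lm ((M : Matrix (Fin 2) (Fin 2) A) 1 0) *
      Um (((M : Matrix (Fin 2) (Fin 2) A) 1 1 - 1) * e) := by
    ext i j
    simp only [Matrix.SpecialLinearGroup.coe_mul]
    fin_cases i <;> fin_cases j <;>
      simp [Um, Lm, Matrix.mul_apply, Fin.sum_univ_two] <;>
      first
      | linear_combination (-((M : Matrix (Fin 2) (Fin 2) A) 0 0 - 1)) * he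
      | linear_combination (-((M : Matrix (Fin 2) (Fin 2) A) 1 1 - 1)) * he
      | linear_combination (-(((M : Matrix (Fin 2) (Fin 2) A) 0 0 - 1) *
          ((M : Matrix (Fin 2) (Fin 2) A) 1 1 - 1) * e + (M : Matrix (Fin 2) (Fin 2) A) 0 1)) * he
          - e * hdet
  rw [key]
  exact mul_mem (mul_mem (Um_mem _) (Lm_mem _)) (Um_mem _)

end

/-- For every local commutative ring `A`, the group `SL₂(A)` is generated by the
upper and lower unipotent matrices. -/
theorem sl2_generated_by_unipotents_of_localRing (A : Type*) [CommRing A] [IsLocalRing A] :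
    Subgroup.closure (upperUnipotent A ∪ lowerUnipotent A) = ⊤ := by
  rw [eq_top_iff]
  intro M _
  set a := (M : Matrix (Fin 2) (Fin 2) A) 0 0 with ha
  set c := (M : Matrix (Fin 2) (Fin 2) A) 1 0 with hcdef
  by_cases hc : IsUnit c
  · exact mem_of_unit M hc
  · have hdet := M.2
    rw [Matrix.det_fin_two] at hdet
    -- a is a unit
    have ha' : IsUnit a := by
      have h1 : a * (M : Matrix (Fin 2) (Fin 2) A) 1 1 +
          (-((M : Matrix (Fin 2) (Fin 2) A) 0 1 * c)) = 1 := by linear_combination hdet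
      rcases IsLocalRing.isUnit_or_isUnit_of_add_one h1 with h | h
      · exact isUnit_of_mul_isUnit_left h
      · have h2 : IsUnit ((M : Matrix (Fin 2) (Fin 2) A) 0 1 * c) := by simpa using h.neg
        exact absurd (isUnit_of_mul_isUnit_right h2) hc
    have hac : IsUnit (a + c) := by
      by_contra h
      have : IsUnit ((a + c) + -c) := by simpa using ha'
      rcases IsLocalRing.isUnit_or_isUnit_of_add_one (a := (a+c) * this.unit⁻¹)
          (b := -c * this.unit⁻¹) (by rw [← add_mul]; exact this.unit.mul_inv) with h' | h'
      · exact h (isUnit_of_mul_isUnit_left h')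
      · exact hc (by simpa using (isUnit_of_mul_isUnit_left h').neg)
    have hmem : Lm (1 : A) * M ∈ Subgroup.closure (upperUnipotent A ∪ lowerUnipotent A) := by
      apply mem_of_unit
      have : ((Lm (1 : A) * M : Matrix.SpecialLinearGroup (Fin 2) A) :
          Matrix (Fin 2) (Fin 2) A) 1 0 = a + c := by
        simp only [Matrix.SpecialLinearGroup.coe_mul]
        simp [Lm, Matrix.mul_apply, Fin.sum_univ_two, ha, hcdef, add_comm]
      rw [this]; exact hac
    have : M = (Lm (1 : A))⁻¹ * (Lm (1 : A) * M) := by group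
    rw [this]
    exact mul_mem (inv_mem (Lm_mem 1)) hmem
end

section
/- Let R be an Artinian local commutative ring with maximal ideal m. A formal Laurent series f = Σᵢ aᵢ tⁱ ∈ R⦅t⦆ is NOT a unit of R⦅t⦆ if and only if every coefficient aᵢ lies in m. -/
open HahnSeries IsLocalRing

/-- Coefficients of powers lie in powers of the ideal. -/
lemma laurent_pow_coeff_mem {R : Type*} [CommRing R] {I : Ideal R} {x : LaurentSeries R}
    (hx : ∀ i : ℤ, x.coeff i ∈ I) (k : ℕ) : ∀ i : ℤ, (x ^ k).coeff i ∈ I ^ k := by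
  induction k with
  | zero => intro i; simp [Ideal.one_eq_top]
  | succ k ih =>
    intro i
    rw [pow_succ, pow_succ, HahnSeries.coeff_mul]
    exact Ideal.sum_mem _ fun ij _ => Ideal.mul_mem_mul (ih ij.1) (hx ij.2)

/-- Let `R` be an Artinian local commutative ring with maximal ideal `m`. A formal
Laurent series `f ∈ R⦅t⦆` is not a unit if and only if every coefficient of `f`
lies in `m`. -/
theorem laurentSeries_not_isUnit_iff (R : Type*) [CommRing R] [IsArtinianRing R]
    [IsLocalRing R] (f : LaurentSeries R) :
    ¬ IsUnit f ↔ ∀ i : ℤ, f.coeff i ∈ IsLocalRing.maximalIdeal R := by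
  classical
  have hm : IsNilpotent (IsLocalRing.maximalIdeal R) :=
    IsLocalRing.jacobson_eq_maximalIdeal (⊥ : Ideal R) bot_ne_top ▸
      IsArtinianRing.isNilpotent_jacobson_bot
  obtain ⟨n, hn⟩ := hm
  set m := IsLocalRing.maximalIdeal R with hmdef
  constructor
  · -- if not a unit, all coefficients in m
    intro hnu i
    by_contra hi
    apply hnu
    letI : Field (R ⧸ m) := Ideal.Quotient.field m
    let q : R →ₙ+* R ⧸ m := (Ideal.Quotient.mk m : R →+* R ⧸ m)
    -- section of q sending 0 to 0
    let s : R ⧸ m → R := fun y =>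
      if y = 0 then 0 else Function.surjInv Ideal.Quotient.mk_surjective y
    have hs : ∀ y, q (s y) = y := by
      intro y
      by_cases hy : y = 0
      · simp [s, q, hy]
      · simp only [s, hy, ↓reduceIte]
        exact Function.surjInv_eq Ideal.Quotient.mk_surjective y
    have hs0 : s 0 = 0 := by simp [s]
    -- the image of f in the Laurent series over the residue field
    let g : LaurentSeries (R ⧸ m) := f.map q
    have hg : g ≠ 0 := by
      intro h0
      apply hi
      have : g.coeff i = 0 := by rw [h0]; rfl
      rw [HahnSeries.map_coeff] at this
      exact (Ideal.Quotient.eq_zero_iff_mem).mp this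
    -- lift the inverse of g
    let h : LaurentSeries (R ⧸ m) := g⁻¹
    let H : LaurentSeries R :=
      ⟨fun i => s (h.coeff i), h.isPWO_support.mono (by
        intro a ha
        simp only [Function.mem_support] at ha ⊢
        intro hz
        exact ha (by rw [hz, hs0]))⟩
    have hHmap : H.map q = h := by
      ext j
      rw [HahnSeries.map_coeff]
      exact hs _
    have hfH : (f * H).map q = 1 := by
      rw [HahnSeries.map_mul q]
      show g * (H.map q) = 1
      rw [hHmap]
      exact mul_inv_cancel₀ hg
    -- f * H = 1 + nilpotent
    set x : LaurentSeries R := f * H - 1 with hx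
    have hxm : ∀ j : ℤ, x.coeff j ∈ m := by
      intro j
      rw [← Ideal.Quotient.eq_zero_iff_mem]
      show q (x.coeff j) = 0
      have h2 : q ((f * H).coeff j) - q ((1 : LaurentSeries R).coeff j) = 0 := by
        have h1 : q ((f * H).coeff j) = ((f * H).map q).coeff j := rfl
        rw [h1, hfH]
        show (1 : LaurentSeries (R ⧸ m)).coeff j
            - Ideal.Quotient.mk m ((1 : LaurentSeries R).coeff j) = 0
        by_cases hj : j = 0 <;> simp [hj, HahnSeries.coeff_one]
      rw [hx, HahnSeries.coeff_sub, map_sub]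
      exact h2
    have hxnil : x ^ n = 0 := by
      ext j
      have := laurent_pow_coeff_mem hxm n j
      rw [hn] at this
      simpa using this
    have hun : IsUnit (f * H) := by
      have hfh1 : f * H = x + 1 := by rw [hx]; ring
      rw [hfh1]
      exact IsNilpotent.isUnit_add_one ⟨n, hxnil⟩
    exact isUnit_of_mul_isUnit_left hun
  · -- if all coefficients in m, not a unit
    intro hall hu
    obtain ⟨u, hu⟩ := hu
    have h1 : (1 : R) = ((u : LaurentSeries R) * (↑u⁻¹ : LaurentSeries R)).coeff 0 := by
      rw [Units.mul_inv]
      simp [HahnSeries.coeff_one]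
    rw [HahnSeries.coeff_mul] at h1
    have hmem : (1 : R) ∈ m := by
      rw [h1]
      refine Ideal.sum_mem _ fun ij _ => Ideal.mul_mem_right _ _ ?_
      rw [hu]
      exact hall ij.1
    exact (Ideal.IsMaximal.ne_top (IsLocalRing.maximalIdeal.isMaximal R))
      ((Ideal.eq_top_iff_one m).mpr hmem)
end

section
/- If R is an Artinian local commutative ring, then the ring R⦅t⦆ of formal Laurent series over R is a local ring (its non-units form an ideal, namely the set of series all of whose coefficients lie in the maximal ideal of R). -/
open HahnSeries IsLocalRing

section aux
variable {R : Type*} [CommRing R]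

lemma coeff_mul_mem_aux {I J : Ideal R} {x y : LaurentSeries R}
    (hx : ∀ i, x.coeff i ∈ I) (hy : ∀ i, y.coeff i ∈ J) (i : ℤ) :
    (x * y).coeff i ∈ I * J := by
  rw [HahnSeries.coeff_mul]
  exact Ideal.sum_mem _ fun ij _ => Ideal.mul_mem_mul (hx _) (hy _)

lemma coeff_pow_mem_aux {I : Ideal R} {x : LaurentSeries R}
    (hx : ∀ i, x.coeff i ∈ I) (n : ℕ) (i : ℤ) : (x ^ n).coeff i ∈ I ^ n := by
  induction n generalizing i with
  | zero => simp
  | succ n ih =>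
      rw [pow_succ, pow_succ]
      exact coeff_mul_mem_aux ih hx i

/-- The coefficientwise residue map as a ring hom. -/
noncomputable def residueLS (R : Type*) [CommRing R] [IsLocalRing R] :
    LaurentSeries R →+* LaurentSeries (ResidueField R) where
  toFun x := x.map (IsLocalRing.residue R)
  map_one' := by
    ext i
    simp only [HahnSeries.map_coeff, HahnSeries.coeff_one]
    split <;> simp
  map_mul' x y := HahnSeries.map_mul (IsLocalRing.residue R).toNonUnitalRingHom
  map_zero' := by ext; simp
  map_add' x y := HahnSeries.map_add (IsLocalRing.residue R).toAddMonoidHom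

lemma residueLS_surjective (R : Type*) [CommRing R] [IsLocalRing R] :
    Function.Surjective (residueLS R) := by
  intro y
  classical
  refine ⟨⟨fun i => if h : y.coeff i = 0 then 0 else Classical.choose
      (Ideal.Quotient.mk_surjective (y.coeff i)), ?_⟩, ?_⟩
  · apply y.isPWO_support.mono
    intro i hi
    simp only [Function.mem_support, ne_eq] at hi ⊢
    intro h
    exact hi (by simp [h])
  · ext i
    simp only [residueLS, RingHom.coe_mk, MonoidHom.coe_mk, OneHom.coe_mk, HahnSeries.map_coeff]
    show (residue R) (if h : y.coeff i = 0 then 0 else Classical.choose (Ideal.Quotient.mk_surjective (y.coeff i))) = y.coeff i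
    by_cases h : y.coeff i = 0
    · simp [h]
    · simp only [h, dif_neg, not_false_iff]
      exact Classical.choose_spec (Ideal.Quotient.mk_surjective (y.coeff i))

end aux

/-- If `R` is an Artinian local commutative ring, then the ring `R⦅t⦆` of formal
Laurent series over `R` is a local ring. -/
theorem laurentSeries_isLocalRing (R : Type*) [CommRing R] [IsArtinianRing R]
    [IsLocalRing R] : IsLocalRing (LaurentSeries R) := by
  obtain ⟨c, hc⟩ : IsNilpotent (maximalIdeal R) := by
    rw [← jacobson_eq_maximalIdeal (⊥ : Ideal R) bot_ne_top]
    exact IsArtinianRing.isNilpotent_jacobson_bot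
  have key : ∀ x : LaurentSeries R, (∀ i, x.coeff i ∈ maximalIdeal R) → IsNilpotent x := by
    intro x hx
    refine ⟨c, ?_⟩
    ext i
    have := coeff_pow_mem_aux hx c i
    rw [hc] at this
    simpa using this
  have hker : ∀ x : LaurentSeries R, residueLS R x = 0 → IsNilpotent x := by
    intro x hx
    apply key
    intro i
    rw [← Ideal.Quotient.eq_zero_iff_mem]
    have : (residueLS R x).coeff i = 0 := by rw [hx]; simp
    exact this
  apply IsLocalRing.of_isUnit_or_isUnit_one_sub_self
  intro x
  by_cases h : residueLS R x = 0
  · right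
    have : residueLS R (1 - x) = 1 := by rw [map_sub, h, map_one, sub_zero]
    obtain ⟨n, hn⟩ := hker x h
    exact (IsNilpotent.isUnit_one_sub ⟨n, hn⟩)
  · left
    obtain ⟨y, hy⟩ := residueLS_surjective R (residueLS R x)⁻¹
    have hunit : residueLS R (x * y) = 1 := by
      rw [map_mul, hy, mul_inv_cancel₀ h]
    have : IsNilpotent (x * y - 1) := by
      apply hker
      rw [map_sub, hunit, map_one, sub_self]
    have hxy : IsUnit (x * y) := by
      have := this.isUnit_add_left_of_commute isUnit_one (Commute.one_right _)
      simpa using this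
    exact isUnit_of_mul_isUnit_left hxy
end

section
/- Let K' be a field extension of K and take A = K', so B = L ⊗_K K'. Then every element of T(K') lies in the subgroup of SL₃(B) generated by U⁺(K') and U⁻(K'). (Kneser–Tits property for the quasi-split group SU₃ over a field.) -/
open Matrix
open scoped TensorProduct

noncomputable section

variable (K L : Type*) [Field K] [Field L] [Algebra K L] (σ : L ≃ₐ[K] L)
variable (A : Type*) [CommRing A] [Algebra K A]

/-- The ring involution `τ = σ ⊗ id` on `B = L ⊗[K] A`. -/
def tau : L ⊗[K] A →ₐ[K] L ⊗[K] A :=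
  Algebra.TensorProduct.map σ.toAlgHom (AlgHom.id K A)

/-- The `A`-points of the unipotent radical of the upper Borel of `SU₃`. -/
def Uplus : Set (Matrix.SpecialLinearGroup (Fin 3) (L ⊗[K] A)) :=
  {M | ∃ u w : L ⊗[K] A, w + tau K L σ A w = u * tau K L σ A u ∧
    (M : Matrix (Fin 3) (Fin 3) (L ⊗[K] A)) = !![1, u, w; 0, 1, tau K L σ A u; 0, 0, 1]}

/-- The `A`-points of the unipotent radical of the lower Borel of `SU₃`:
the transposes of elements of `Uplus`. -/
def Uminus : Set (Matrix.SpecialLinearGroup (Fin 3) (L ⊗[K] A)) :=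
  {M | ∃ u w : L ⊗[K] A, w + tau K L σ A w = u * tau K L σ A u ∧
    (M : Matrix (Fin 3) (Fin 3) (L ⊗[K] A)) =
      (!![1, u, w; 0, 1, tau K L σ A u; 0, 0, 1])ᵀ}

/-- The `A`-points of the standard maximal torus of `SU₃`. -/
def Torus : Set (Matrix.SpecialLinearGroup (Fin 3) (L ⊗[K] A)) :=
  {M | ∃ y : (L ⊗[K] A)ˣ,
    (M : Matrix (Fin 3) (Fin 3) (L ⊗[K] A)) =
      !![(y : L ⊗[K] A), 0, 0;
         0, ((y⁻¹ : (L ⊗[K] A)ˣ) : L ⊗[K] A) * tau K L σ A y, 0;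
         0, 0, tau K L σ A ((y⁻¹ : (L ⊗[K] A)ˣ) : L ⊗[K] A)]}

/-- The diagonal torus matrix attached to a unit `y`. -/
def Tmat (y : (L ⊗[K] A)ˣ) : Matrix (Fin 3) (Fin 3) (L ⊗[K] A) :=
  !![(y : L ⊗[K] A), 0, 0;
     0, ((y⁻¹ : (L ⊗[K] A)ˣ) : L ⊗[K] A) * tau K L σ A y, 0;
     0, 0, tau K L σ A ((y⁻¹ : (L ⊗[K] A)ˣ) : L ⊗[K] A)]

lemma det_Tmat (y : (L ⊗[K] A)ˣ) : (Tmat K L σ A y).det = 1 := by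
  simp [Tmat, Matrix.det_fin_three]
  rw [← _root_.map_mul]
  simp

/-- The diagonal torus matrix as an element of `SL₃`. -/
def TmatSL (y : (L ⊗[K] A)ˣ) : Matrix.SpecialLinearGroup (Fin 3) (L ⊗[K] A) :=
  ⟨Tmat K L σ A y, det_Tmat K L σ A y⟩

lemma TmatSL_mul (y₁ y₂ : (L ⊗[K] A)ˣ) :
    TmatSL K L σ A (y₁ * y₂) = TmatSL K L σ A y₁ * TmatSL K L σ A y₂ := by
  apply Subtype.ext
  show Tmat K L σ A (y₁ * y₂) = Tmat K L σ A y₁ * Tmat K L σ A y₂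
  rw [Tmat, Tmat, Tmat, Matrix.mul_fin_three]
  congr 1 <;> push_cast <;> simp [_root_.map_mul, _root_.mul_inv_rev] <;> ring_nf <;> exact ⟨trivial, trivial⟩

set_option maxHeartbeats 1000000 in
/-- Core lemma: if `y = 1 + u v + W Z` for admissible pairs `(u, W)` and `(v, Z)`,
then the torus element attached to `y` lies in the subgroup generated by the
unipotent subgroups. This comes from the `LDU` decomposition of the product of the
corresponding upper and lower unipotent matrices. -/
lemma memA (h2 : ∀ b : L ⊗[K] A, tau K L σ A (tau K L σ A b) = b)
    (u v W Z : L ⊗[K] A) (y : (L ⊗[K] A)ˣ)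
    (hW : W + tau K L σ A W = u * tau K L σ A u)
    (hZ : Z + tau K L σ A Z = v * tau K L σ A v)
    (hy : (y : L ⊗[K] A) = 1 + u * v + W * Z) :
    TmatSL K L σ A y ∈ Subgroup.closure (Uplus K L σ A ∪ Uminus K L σ A) := by
  set f := tau K L σ A with hf
  set yc : L ⊗[K] A := (y : L ⊗[K] A) with hyc
  set yi : L ⊗[K] A := ((y⁻¹ : (L ⊗[K] A)ˣ) : L ⊗[K] A) with hyidef
  have hyi : yc * yi = 1 := y.mul_inv
  have hti : f yc * f yi = 1 := by rw [← _root_.map_mul, hyi, _root_.map_one]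
  have hyt : f yc = 1 + f u * f v + f W * f Z := by
    rw [hy]; simp only [map_add, _root_.map_mul, _root_.map_one]
  set a : L ⊗[K] A := (v + f u * Z) * yi with ha
  set b : L ⊗[K] A := Z * yi with hb
  set c : L ⊗[K] A := (u + W * f v) * yi with hc
  set d : L ⊗[K] A := W * yi with hd
  have hfa : f a = (f v + u * f Z) * f yi := by
    rw [ha]; simp only [_root_.map_mul, map_add, h2]
  have hfb : f b = f Z * f yi := by rw [hb]; simp only [_root_.map_mul]
  have hfc : f c = (f u + f W * v) * f yi := by
    rw [hc]; simp only [_root_.map_mul, map_add, h2]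
  have hfd : f d = f W * f yi := by rw [hd]; simp only [_root_.map_mul]
  have detX1 : (!![1, u, W; 0, 1, f u; 0, 0, 1] : Matrix (Fin 3) (Fin 3) (L ⊗[K] A)).det = 1 := by
    simp [Matrix.det_fin_three, Matrix.vecHead, Matrix.vecTail]
  have detY1 : (!![(1:L ⊗[K] A), 0, 0; v, 1, 0; Z, f v, 1]).det = 1 := by
    simp [Matrix.det_fin_three, Matrix.vecHead, Matrix.vecTail]
  have detY2 : (!![(1:L ⊗[K] A), 0, 0; a, 1, 0; b, f a, 1]).det = 1 := by
    simp [Matrix.det_fin_three, Matrix.vecHead, Matrix.vecTail]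
  have detX2 : (!![(1:L ⊗[K] A), c, d; 0, 1, f c; 0, 0, 1]).det = 1 := by
    simp [Matrix.det_fin_three, Matrix.vecHead, Matrix.vecTail]
  set X1 : Matrix.SpecialLinearGroup (Fin 3) (L ⊗[K] A) := ⟨_, detX1⟩ with hX1
  set Y1 : Matrix.SpecialLinearGroup (Fin 3) (L ⊗[K] A) := ⟨_, detY1⟩ with hY1
  set Y2 : Matrix.SpecialLinearGroup (Fin 3) (L ⊗[K] A) := ⟨_, detY2⟩ with hY2
  set X2 : Matrix.SpecialLinearGroup (Fin 3) (L ⊗[K] A) := ⟨_, detX2⟩ with hX2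
  have memX1 : X1 ∈ Uplus K L σ A := ⟨u, W, hW, rfl⟩
  have memY1 : Y1 ∈ Uminus K L σ A := by
    refine ⟨v, Z, hZ, ?_⟩
    show !![(1:L ⊗[K] A), 0, 0; v, 1, 0; Z, f v, 1] = _
    ext i j
    fin_cases i <;> fin_cases j <;> rfl
  have K1 : Z * f yc + f Z * yc = (v + f u * Z) * (f v + u * f Z) := by
    linear_combination Z * hyt + f Z * hy + hZ + Z * f Z * hW
  have K2 : W * f yc + f W * yc = (u + W * f v) * (f u + f W * v) := by
    linear_combination W * hyt + f W * hy + hW + W * f W * hZ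
  have memY2 : Y2 ∈ Uminus K L σ A := by
    refine ⟨a, b, ?_, ?_⟩
    · rw [hfa, hfb, ha, hb]
      linear_combination yi * f yi * K1 - Z * yi * hti - f Z * f yi * hyi
    · show !![(1:L ⊗[K] A), 0, 0; a, 1, 0; b, f a, 1] = _
      ext i j
      fin_cases i <;> fin_cases j <;> rfl
  have memX2 : X2 ∈ Uplus K L σ A := by
    refine ⟨c, d, ?_, rfl⟩
    rw [hfc, hfd, hc, hd]
    linear_combination yi * f yi * K2 - W * yi * hti - f W * f yi * hyi
  have HM : (Y2 : Matrix (Fin 3) (Fin 3) (L ⊗[K] A)) * Tmat K L σ A y * (X2 : Matrix (Fin 3) (Fin 3) (L ⊗[K] A))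
      = (X1 : Matrix (Fin 3) (Fin 3) (L ⊗[K] A)) * (Y1 : Matrix (Fin 3) (Fin 3) (L ⊗[K] A)) := by
    have E22 : (v + f u * Z) * (u + W * f v) + f yc = yc * (1 + f u * f v) := by
      linear_combination hyt - (1 + f u * f v) * hy + f W * hZ + (v * f v - Z) * hW
    have E23 : (v + f u * Z) * W + (f u + f W * v) = f u * yc := by
      linear_combination v * hW - f u * hy
    have E32 : Z * (u + W * f v) + (f v + u * f Z) = f v * yc := by
      linear_combination u * hZ - f v * hy
    have E33 : Z * W * f yc + (f v + u * f Z) * (f u + f W * v) + yc = yc * f yc := by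
      linear_combination (Z * W - yc) * hyt - (f u * f v + f W * f Z) * hy + (v * f v - f Z) * hW + W * hZ
    rw [Tmat]
    ext i j
    fin_cases i <;> fin_cases j <;>
      simp [Matrix.mul_apply, Fin.sum_univ_succ, Matrix.vecHead, Matrix.vecTail, X1, Y1, Y2, X2] <;>
      (try simp only [← hf])
    · linear_combination hy
    · rw [hc]; linear_combination (u + W * f v) * hyi
    · rw [hd]; linear_combination W * hyi
    · rw [ha]; linear_combination (v + f u * Z) * hyi
    · rw [ha, hc]
      linear_combination yi * yi * yc * E22 + ((1 + f u * f v) * (yc * yi + 1) - yi * f yc) * hyi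
    · rw [hfc, ha, hd]
      linear_combination yi * yi * yc * E23 + yi * (f u + f W * v) * hti +
        (f u * (yc * yi + 1) - yi * (f u + f W * v)) * hyi
    · rw [hb]; linear_combination Z * hyi
    · rw [hfa, hb, hc]
      linear_combination yi * yi * yc * E32 + yi * (f v + u * f Z) * hti +
        (f v * (yc * yi + 1) - yi * (f v + u * f Z)) * hyi
    · rw [hfa, hfc, hb, hd]
      linear_combination yi * f yi * E33 + (Z * W * yi - f yi + f yc * f yi) * hyi +
        ((f v + u * f Z) * (f u + f W * v) * yi * f yi - Z * W * yi + 1) * hti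
  have hXY : Y2 * TmatSL K L σ A y * X2 = X1 * Y1 := by
    apply Subtype.ext
    push_cast
    exact HM
  have hfinal : TmatSL K L σ A y = Y2⁻¹ * (X1 * Y1) * X2⁻¹ := by
    rw [← hXY]; group
  rw [hfinal]
  have m1 : X1 ∈ Subgroup.closure (Uplus K L σ A ∪ Uminus K L σ A) :=
    Subgroup.subset_closure (Set.mem_union_left _ memX1)
  have m2 : Y1 ∈ Subgroup.closure (Uplus K L σ A ∪ Uminus K L σ A) :=
    Subgroup.subset_closure (Set.mem_union_right _ memY1)
  have m3 : Y2 ∈ Subgroup.closure (Uplus K L σ A ∪ Uminus K L σ A) :=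
    Subgroup.subset_closure (Set.mem_union_right _ memY2)
  have m4 : X2 ∈ Subgroup.closure (Uplus K L σ A ∪ Uminus K L σ A) :=
    Subgroup.subset_closure (Set.mem_union_left _ memX2)
  exact mul_mem (mul_mem (inv_mem m3) (mul_mem m1 m2)) (inv_mem m4)

set_option maxHeartbeats 1000000 in
/-- Kneser–Tits property for the quasi-split group `SU₃` over a field extension
`K'` of `K`: every element of `T(K')` lies in the subgroup of `SL₃(L ⊗[K] K')`
generated by `U⁺(K')` and `U⁻(K')`. -/
theorem kneserTits_SU3_field [IsGalois K L] (hdeg : Module.finrank K L = 2)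
    (hσ : σ ≠ AlgEquiv.refl)
    (K' : Type*) [Field K'] [Algebra K K']
    (M : Matrix.SpecialLinearGroup (Fin 3) (L ⊗[K] K')) (hM : M ∈ Torus K L σ K') :
    M ∈ Subgroup.closure (Uplus K L σ K' ∪ Uminus K L σ K') := by
  classical
  obtain ⟨y, hy⟩ := hM
  have hMeq : M = TmatSL K L σ K' y := Subtype.ext (by rw [hy]; rfl)
  rw [hMeq]; clear hMeq hy M
  -- basic facts about σ
  have hFD : FiniteDimensional K L := FiniteDimensional.of_finrank_eq_succ hdeg
  have hσ2 : ∀ x : L, σ (σ x) = x := by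
    have hcard : Fintype.card (L ≃ₐ[K] L) = 2 := by
      rw [← Nat.card_eq_fintype_card, IsGalois.card_aut_eq_finrank, hdeg]
    have hpow : σ ^ 2 = 1 := by rw [← hcard]; exact pow_card_eq_one
    intro x
    have := congrArg (fun e : L ≃ₐ[K] L => e x) hpow
    simpa [sq, AlgEquiv.mul_apply] using this
  have htau : ∀ (x : L) (s : K'), tau K L σ K' (x ⊗ₜ s) = σ x ⊗ₜ s := by
    intro x s; simp [tau]
  have h2 : ∀ b : L ⊗[K] K', tau K L σ K' (tau K L σ K' b) = b := by
    intro b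
    induction b using TensorProduct.induction_on with
    | zero => simp
    | tmul l k => rw [htau, htau, hσ2]
    | add x z hx hz => rw [map_add, map_add, hx, hz]
  -- the element lam
  obtain ⟨lam, hlam⟩ : ∃ l : L, σ l ≠ l := by
    by_contra h
    push_neg at h
    exact hσ (AlgEquiv.ext h)
  have hlam0 : lam ≠ 0 := fun hc => hlam (by rw [hc, map_zero])
  have hLI : LinearIndependent K ![1, lam] := by
    rw [LinearIndependent.pair_iff]
    intro s t hst
    rw [Algebra.smul_def, Algebra.smul_def, mul_one] at hst
    have ht : t = 0 := by
      by_contra ht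
      apply hlam
      have hx2 : algebraMap K L s + algebraMap K L t * σ lam = 0 := by
        have := congrArg σ hst
        simpa [map_add, _root_.map_mul, AlgEquiv.commutes] using this
      have hx3 : algebraMap K L t * (σ lam - lam) = 0 := by linear_combination hx2 - hst
      have hx4 : (algebraMap K L t) ≠ 0 := fun hc => ht (by
        exact (map_eq_zero_iff _ (RingHom.injective _)).mp hc)
      rcases mul_eq_zero.mp hx3 with h | h
      · exact absurd h hx4
      · exact sub_eq_zero.mp h
    subst ht
    refine ⟨?_, rfl⟩
    rw [map_zero, zero_mul, add_zero] at hst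
    exact (map_eq_zero_iff _ (RingHom.injective _)).mp hst
  have hsp : ∀ l : L, ∃ p q : K, l = algebraMap K L p + q • lam := by
    intro l
    have hspan := hLI.span_eq_top_of_card_eq_finrank (by simp [hdeg])
    have hl : l ∈ Submodule.span K (Set.range ![1, lam]) := by rw [hspan]; trivial
    rw [show Set.range ![1, lam] = {1, lam} by
      simp [Matrix.range_cons, Matrix.range_empty, Set.pair_comm]] at hl
    rw [Submodule.mem_span_pair] at hl
    obtain ⟨p, q, hpq⟩ := hl
    exact ⟨p, q, by rw [← hpq, Algebra.algebraMap_eq_smul_one]⟩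
  -- trace of lam
  obtain ⟨t, ht⟩ : ∃ t : K, σ lam = algebraMap K L t - lam := by
    obtain ⟨p, q, hpq⟩ := hsp (σ lam)
    refine ⟨p, ?_⟩
    have hpq' : σ lam = algebraMap K L p + algebraMap K L q * lam := by
      rw [hpq, Algebra.smul_def]
    have h1 : lam = algebraMap K L p + algebraMap K L q * σ lam := by
      have := congrArg σ hpq'
      rw [hσ2, map_add, _root_.map_mul, AlgEquiv.commutes, AlgEquiv.commutes] at this
      exact this
    have hq2 : algebraMap K L (p + q * p) + algebraMap K L (q * q - 1) * lam = 0 := by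
      simp only [map_add, _root_.map_mul, map_sub, _root_.map_one]
      linear_combination -h1 - algebraMap K L q * hpq'
    have hLI2 := LinearIndependent.pair_iff.mp hLI (p + q * p) (q * q - 1) (by
      rw [Algebra.smul_def, Algebra.smul_def, mul_one]; exact hq2)
    obtain ⟨hA, hB⟩ := hLI2
    have hq : q = -1 := by
      have hq3 : (q - 1) * (q + 1) = 0 := by linear_combination hB
      rcases mul_eq_zero.mp hq3 with h | h
      · by_cases hchar : (2 : K) = 0
        · linear_combination h + hchar
        · exfalso
          apply hlam
          have hq1 : q = 1 := by linear_combination h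
          have hp0 : p = 0 := by
            have h2p : (2 : K) * p = 0 := by rw [hq1] at hA; linear_combination hA
            exact (mul_eq_zero.mp h2p).resolve_left hchar
          rw [hpq', hp0, hq1, map_zero, _root_.map_one, zero_add, one_mul]
      · linear_combination h
    rw [hpq', hq, map_neg, _root_.map_one]
    ring
  -- decomposition of elements of the tensor product
  have hdec : ∀ b : L ⊗[K] K', ∃ α β : K', b = 1 ⊗ₜ α + lam ⊗ₜ β := by
    intro b
    induction b using TensorProduct.induction_on with
    | zero => exact ⟨0, 0, by simp⟩
    | tmul l k =>
      obtain ⟨p, q, hpq⟩ := hsp l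
      refine ⟨algebraMap K K' p * k, algebraMap K K' q * k, ?_⟩
      rw [hpq, TensorProduct.add_tmul, Algebra.algebraMap_eq_smul_one,
        TensorProduct.smul_tmul, TensorProduct.smul_tmul, Algebra.smul_def, Algebra.smul_def]
    | add x z hx hz =>
      obtain ⟨a1, b1, h1⟩ := hx
      obtain ⟨a2, b2, h2'⟩ := hz
      exact ⟨a1 + a2, b1 + b2, by
        rw [h1, h2', TensorProduct.tmul_add, TensorProduct.tmul_add]; ring⟩
  obtain ⟨α, β, hαβ⟩ := hdec (y : L ⊗[K] K')
  -- delta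
  set δ : L := lam - σ lam with hδdef
  have hδ0 : δ ≠ 0 := sub_ne_zero.mpr (Ne.symm hlam)
  have hσδ : σ δ = -δ := by rw [hδdef, map_sub, hσ2]; ring
  have hσδi : σ δ⁻¹ = -δ⁻¹ := by rw [map_inv₀, hσδ, inv_neg]
  have halg : ∀ (k : K) (s : K'), (algebraMap K L k) ⊗ₜ[K] s
      = (1 : L) ⊗ₜ (algebraMap K K' k * s) := by
    intro k s
    rw [Algebra.algebraMap_eq_smul_one, TensorProduct.smul_tmul, Algebra.smul_def]
  -- scalar torus elements
  have memSc : ∀ (s : K'), s ≠ 0 → ∀ su : (L ⊗[K] K')ˣ, (su : L ⊗[K] K') = 1 ⊗ₜ s →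
      TmatSL K L σ K' su ∈ Subgroup.closure (Uplus K L σ K' ∪ Uminus K L σ K') := by
    intro s hs su hsu
    apply memA K L σ K' h2 0 0 (((1:L) ⊗ₜ s - 1) * (δ⁻¹ ⊗ₜ 1)) (δ ⊗ₜ 1) su
    · rw [_root_.map_mul, map_sub, _root_.map_one, htau, htau, hσδi, map_zero, zero_mul,
        _root_.map_one, TensorProduct.neg_tmul]
      ring
    · rw [htau, hσδ, TensorProduct.neg_tmul, map_zero, zero_mul]
      ring
    · rw [hsu, mul_assoc, Algebra.TensorProduct.tmul_mul_tmul, inv_mul_cancel₀ hδ0, mul_one,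
        ← Algebra.TensorProduct.one_def]
      ring
  -- z-theta
  set zθ : L := -δ⁻¹ * σ lam with hzθdef
  have hσzθ : σ zθ = δ⁻¹ * lam := by
    rw [hzθdef, _root_.map_mul, map_neg, hσδi, hσ2]
    ring
  have hzθ1 : zθ + σ zθ = 1 := by
    rw [hσzθ, hzθdef]
    field_simp
    rw [hδdef]
    ring
  have hδzθ : δ * zθ = lam - algebraMap K L t := by
    rw [hzθdef, ht]
    field_simp
    ring
  set t' : K' := algebraMap K K' t with ht'def
  set c0 : K' := α + t' * β with hc0def
  by_cases hc0 : c0 = 0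
  · -- y = Ψ * β, with Ψ = (lam - t)⊗1
    have hβ0 : β ≠ 0 := by
      intro hb
      have hα0 : α = 0 := by
        rw [hc0def, hb, mul_zero, add_zero] at hc0
        exact hc0
      have hy0 : (y : L ⊗[K] K') = 0 := by rw [hαβ, hα0, hb]; simp
      have h1 : (1 : L ⊗[K] K') = 0 := by
        rw [← y.inv_mul, hy0, mul_zero]
      exact one_ne_zero h1
    set ψ : L := lam - algebraMap K L t with hψdef
    have hψσ : ψ = -σ lam := by rw [hψdef, ht]; ring
    have hψ0 : ψ ≠ 0 := by
      rw [hψσ, neg_ne_zero]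
      intro hc
      apply hlam0
      have := congrArg σ hc
      rw [hσ2, map_zero] at this
      exact this
    set Ψu : (L ⊗[K] K')ˣ := ⟨ψ ⊗ₜ 1, ψ⁻¹ ⊗ₜ 1,
      by rw [Algebra.TensorProduct.tmul_mul_tmul, mul_inv_cancel₀ hψ0, mul_one,
        Algebra.TensorProduct.one_def],
      by rw [Algebra.TensorProduct.tmul_mul_tmul, inv_mul_cancel₀ hψ0, mul_one,
        Algebra.TensorProduct.one_def]⟩ with hΨu
    set βu : (L ⊗[K] K')ˣ := ⟨1 ⊗ₜ β, 1 ⊗ₜ β⁻¹,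
      by rw [Algebra.TensorProduct.tmul_mul_tmul, mul_inv_cancel₀ hβ0, mul_one,
        Algebra.TensorProduct.one_def],
      by rw [Algebra.TensorProduct.tmul_mul_tmul, inv_mul_cancel₀ hβ0, mul_one,
        Algebra.TensorProduct.one_def]⟩ with hβu
    have hyfac : y = Ψu * βu := by
      apply Units.ext
      rw [Units.val_mul]
      show (y : L ⊗[K] K') = (ψ ⊗ₜ 1) * ((1:L) ⊗ₜ β)
      rw [Algebra.TensorProduct.tmul_mul_tmul, mul_one, one_mul, hψdef,
        TensorProduct.sub_tmul, halg, hαβ]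
      have hα : α = -(t' * β) := by
        rw [hc0def] at hc0
        linear_combination hc0
      rw [hα, TensorProduct.tmul_neg]
      ring
    rw [hyfac, TmatSL_mul]
    refine mul_mem ?_ (memSc β hβ0 βu rfl)
    apply memA K L σ K' h2 0 1 (δ ⊗ₜ 1) ((zθ - δ⁻¹) ⊗ₜ 1) Ψu
    · rw [htau, hσδ, TensorProduct.neg_tmul, map_zero, zero_mul]
      ring
    · have hs1 : zθ - δ⁻¹ + σ (zθ - δ⁻¹) = 1 := by
        rw [map_sub, hσzθ, hσδi]
        have h := hzθ1
        rw [hσzθ] at h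
        linear_combination h
      calc (zθ - δ⁻¹) ⊗ₜ[K] (1:K') + tau K L σ K' ((zθ - δ⁻¹) ⊗ₜ 1)
          = (zθ - δ⁻¹ + σ (zθ - δ⁻¹)) ⊗ₜ 1 := by rw [htau, TensorProduct.add_tmul]
        _ = (1:L) ⊗ₜ (1:K') := by rw [hs1]
        _ = 1 * tau K L σ K' 1 := by
            rw [_root_.map_one, mul_one, Algebra.TensorProduct.one_def]
    · show (ψ ⊗ₜ 1 : L ⊗[K] K') = _
      rw [Algebra.TensorProduct.tmul_mul_tmul,
        show δ * (zθ - δ⁻¹) = ψ - 1 from by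
          rw [mul_sub, hδzθ, mul_inv_cancel₀ hδ0, hψdef]]
      rw [show ((1:K') * 1) = 1 from one_mul 1, hψdef, TensorProduct.sub_tmul,
        TensorProduct.sub_tmul, TensorProduct.sub_tmul, ← Algebra.TensorProduct.one_def]
      ring
  · -- y = (y * hu⁻¹) * hu with hu = 1 ⊗ c0
    set hu : (L ⊗[K] K')ˣ := ⟨1 ⊗ₜ c0, 1 ⊗ₜ c0⁻¹,
      by rw [Algebra.TensorProduct.tmul_mul_tmul, mul_inv_cancel₀ hc0, mul_one,
        Algebra.TensorProduct.one_def],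
      by rw [Algebra.TensorProduct.tmul_mul_tmul, inv_mul_cancel₀ hc0, mul_one,
        Algebra.TensorProduct.one_def]⟩ with hhu
    have hyfac : y = (y * hu⁻¹) * hu := by group
    rw [hyfac, TmatSL_mul]
    refine mul_mem ?_ (memSc c0 hc0 hu rfl)
    apply memA K L σ K' h2 0 1 (δ ⊗ₜ (β * c0⁻¹)) (zθ ⊗ₜ 1) (y * hu⁻¹)
    · rw [htau, hσδ, TensorProduct.neg_tmul, map_zero, zero_mul]
      ring
    · rw [htau, _root_.map_one, one_mul, ← TensorProduct.add_tmul, hzθ1,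
        Algebra.TensorProduct.one_def]
    · rw [Units.val_mul]
      show (y : L ⊗[K] K') * ((1:L) ⊗ₜ c0⁻¹) = _
      rw [hαβ, add_mul, Algebra.TensorProduct.tmul_mul_tmul,
        Algebra.TensorProduct.tmul_mul_tmul, one_mul, mul_one,
        Algebra.TensorProduct.tmul_mul_tmul, mul_one, hδzθ,
        TensorProduct.sub_tmul, halg]
      have hcoeff : α * c0⁻¹ = 1 - t' * (β * c0⁻¹) := by
        field_simp
        rw [hc0def]
        ring
      rw [hcoeff, TensorProduct.tmul_sub, ← Algebra.TensorProduct.one_def, ← ht'def]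
      ring
end
end

section
/- Let K' be a field extension of K and take A = K', so B = L ⊗_K K'. Let y be a unit of B such that y + τ(y) = x·τ(x) for some x ∈ B. Then the matrix n_y := [[0,0,y],[0,−y⁻¹·τ(y),0],[τ(y)⁻¹,0,0]] lies in the subgroup of SL₃(B) generated by U⁺(K') and U⁻(K'). -/
open Matrix
open scoped TensorProduct

noncomputable section

variable (K L : Type*) [Field K] [Field L] [Algebra K L] (σ : L ≃ₐ[K] L)
variable (A : Type*) [CommRing A] [Algebra K A]

set_option maxHeartbeats 1000000

/-- Let `y` be a unit of `B = L ⊗[K] K'` such that `y + τ(y) = x·τ(x)` for some `x ∈ B`.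
Then the matrix `n_y = [[0,0,y],[0,−y⁻¹·τ(y),0],[τ(y)⁻¹,0,0]]` lies in the subgroup of
`SL₃(B)` generated by `U⁺(K')` and `U⁻(K')`. -/
theorem n_y_mem_closure [IsGalois K L] (hdeg : Module.finrank K L = 2)
    (hσ : σ ≠ AlgEquiv.refl)
    (K' : Type*) [Field K'] [Algebra K K']
    (y : (L ⊗[K] K')ˣ) (x : L ⊗[K] K')
    (hy : (y : L ⊗[K] K') + tau K L σ K' (y : L ⊗[K] K') = x * tau K L σ K' x)
    (M : Matrix.SpecialLinearGroup (Fin 3) (L ⊗[K] K'))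
    (hM : (M : Matrix (Fin 3) (Fin 3) (L ⊗[K] K')) =
      !![0, 0, (y : L ⊗[K] K');
         0, -(((y⁻¹ : (L ⊗[K] K')ˣ) : L ⊗[K] K') * tau K L σ K' (y : L ⊗[K] K')), 0;
         tau K L σ K' ((y⁻¹ : (L ⊗[K] K')ˣ) : L ⊗[K] K'), 0, 0]) :
    M ∈ Subgroup.closure (Uplus K L σ K' ∪ Uminus K L σ K') := by
  classical
  have hfd : FiniteDimensional K L := by
    refine FiniteDimensional.of_finrank_pos ?_
    rw [hdeg]; norm_num
  have hσ2 : ∀ l : L, σ (σ l) = l := by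
    have hcard : Fintype.card (L ≃ₐ[K] L) = 2 := by
      rw [← Nat.card_eq_fintype_card, IsGalois.card_aut_eq_finrank, hdeg]
    have h : σ ^ 2 = 1 := by
      rw [← hcard]; exact pow_card_eq_one
    intro l
    have := congrArg (fun e : L ≃ₐ[K] L => e l) h
    simpa [pow_two, AlgEquiv.mul_apply] using this
  set t : L ⊗[K] K' →ₐ[K] L ⊗[K] K' := tau K L σ K' with htdef
  have htt : ∀ z : L ⊗[K] K', t (t z) = z := by
    intro z
    induction z using TensorProduct.induction_on with
    | zero => simp
    | tmul l a => simp [htdef, tau, hσ2]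
    | add a b ha hb => rw [map_add, map_add, ha, hb]
  set p : L ⊗[K] K' := (y : L ⊗[K] K') with hp
  set q : L ⊗[K] K' := ((y⁻¹ : (L ⊗[K] K')ˣ) : L ⊗[K] K') with hq
  have h1 : p * q = 1 := y.mul_inv
  have h2 : t p * t q = 1 := by rw [← _root_.map_mul, h1, _root_.map_one]
  set r : L ⊗[K] K' := t p with hr
  set s : L ⊗[K] K' := t q with hs
  set X : L ⊗[K] K' := x with hX
  set Y : L ⊗[K] K' := t x with hY
  have htY : t Y = X := htt x
  have hts : t s = q := htt q
  set u1 : L ⊗[K] K' := -(p * Y * s) with hu1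
  set u2 : L ⊗[K] K' := X * q with hu2
  set u3 : L ⊗[K] K' := -Y with hu3
  have htu1 : t u1 = -(r * X * q) := by
    rw [hu1, map_neg, _root_.map_mul, _root_.map_mul, htY, hts]
  have htu2 : t u2 = Y * s := by
    rw [hu2, _root_.map_mul]
  have htu3 : t u3 = -X := by rw [hu3, map_neg, htY]
  have c1 : p + t p = u1 * t u1 := by
    rw [htu1, hu1]; linear_combination hy - X*Y*r*s*h1 - X*Y*h2
  have c2 : s + t s = u2 * t u2 := by
    rw [htu2, hu2, hts]; linear_combination q*s*hy - s*h1 - q*h2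
  have c3 : p + t p = u3 * t u3 := by
    rw [htu3, hu3]; linear_combination hy
  have d1 : (!![1, u1, p; 0, 1, t u1; 0, 0, 1] :
      Matrix (Fin 3) (Fin 3) (L ⊗[K] K')).det = 1 := by
    simp [Matrix.det_fin_three, Matrix.vecHead, Matrix.vecTail]
  have d2 : (!![1, 0, 0; u2, 1, 0; s, t u2, 1] :
      Matrix (Fin 3) (Fin 3) (L ⊗[K] K')).det = 1 := by
    simp [Matrix.det_fin_three, Matrix.vecHead, Matrix.vecTail]
  have d3 : (!![1, u3, p; 0, 1, t u3; 0, 0, 1] :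
      Matrix (Fin 3) (Fin 3) (L ⊗[K] K')).det = 1 := by
    simp [Matrix.det_fin_three, Matrix.vecHead, Matrix.vecTail]
  have htr : (!![1, u2, s; 0, 1, t u2; 0, 0, 1] :
      Matrix (Fin 3) (Fin 3) (L ⊗[K] K'))ᵀ = !![1, 0, 0; u2, 1, 0; s, t u2, 1] := by
    ext i j
    fin_cases i <;> fin_cases j <;> rfl
  have hmem1 : (⟨_, d1⟩ : Matrix.SpecialLinearGroup (Fin 3) (L ⊗[K] K')) ∈ Uplus K L σ K' :=
    ⟨u1, p, c1, rfl⟩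
  have hmem2 : (⟨_, d2⟩ : Matrix.SpecialLinearGroup (Fin 3) (L ⊗[K] K')) ∈ Uminus K L σ K' :=
    ⟨u2, s, c2, htr.symm⟩
  have hmem3 : (⟨_, d3⟩ : Matrix.SpecialLinearGroup (Fin 3) (L ⊗[K] K')) ∈ Uplus K L σ K' :=
    ⟨u3, p, c3, rfl⟩
  have hprod : M = ⟨_, d1⟩ * ⟨_, d2⟩ * ⟨_, d3⟩ := by
    apply Subtype.ext
    refine hM.trans ?_
    show _ = (!![1, u1, p; 0, 1, t u1; 0, 0, 1] *
        !![1, 0, 0; u2, 1, 0; s, t u2, 1]) * !![1, u3, p; 0, 1, t u3; 0, 0, 1]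
    rw [htu1, htu2, htu3, hu1, hu2, hu3, Matrix.mul_fin_three, Matrix.mul_fin_three]
    ext i j
    fin_cases i <;> fin_cases j <;>
      simp [Matrix.vecHead, Matrix.vecTail]
    · linear_combination X*Y*s*h1 - s*hy + h2
    · linear_combination -X*Y*Y*s*h1 + Y*s*hy - Y*h2
    · linear_combination -X*Y*p*s*h1 + p*s*hy - p*h2
    · linear_combination X*q*h2
    · linear_combination h1 - q*hy
    · linear_combination -X*h1 - r*X*q*h2 + r*X*q*s*hy
    · ring1
    · linear_combination -s*hy + h2
  rw [hprod]
  exact mul_mem (mul_mem (Subgroup.subset_closure (Or.inl hmem1))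
      (Subgroup.subset_closure (Or.inr hmem2)))
    (Subgroup.subset_closure (Or.inl hmem3))
end
end

section
/- Let K' be a field extension of K and take A = K', so B = L ⊗_K K'. Then for every nonzero λ ∈ K', the diagonal matrix a_λ := diag(λ, 1, λ⁻¹) (with λ viewed in B via the natural map K' → B) lies in the subgroup of SL₃(B) generated by U⁺(K') and U⁻(K'). -/
open Matrix
open scoped TensorProduct

noncomputable section

variable (K L : Type*) [Field K] [Field L] [Algebra K L] (σ : L ≃ₐ[K] L)
variable (A : Type*) [CommRing A] [Algebra K A]

section helpers

variable {R : Type*} [CommRing R]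

lemma wfact (t t' : R) (h : t * t' = 1) :
    (!![0,0,t;0,1,0;-t',0,0] : Matrix (Fin 3) (Fin 3) R) =
      !![1,0,t;0,1,0;0,0,1] * !![1,0,0;0,1,0;-t',0,1] * !![1,0,t;0,1,0;0,0,1] := by
  ext i j
  fin_cases i <;> fin_cases j <;>
    simp [Matrix.mul_apply, Fin.sum_univ_succ, Matrix.vecHead, Matrix.vecTail] <;>
    first
      | linear_combination h | linear_combination (1+t)*h | linear_combination (1+2*t)*h
      | linear_combination (1+3*t)*h | linear_combination t*h | linear_combination (t+t^2)*h
      | linear_combination (2*t+t^2)*h | linear_combination (1+t+t^2)*h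
      | linear_combination (-(1+t)^2)*h | linear_combination (-(1+t))*h
      | linear_combination (-1:R)*h | linear_combination (-t)*h

lemma wmul (t t' s s' : R) :
    (!![0,0,t;0,1,0;-t',0,0] : Matrix (Fin 3) (Fin 3) R) * !![0,0,-s;0,1,0;s',0,0] =
      !![t*s',0,0;0,1,0;0,0,t'*s] := by
  ext i j
  fin_cases i <;> fin_cases j <;>
    simp [Matrix.mul_apply, Fin.sum_univ_succ, Matrix.vecHead, Matrix.vecTail]

lemma trans_eq (x : R) :
    (!![1,0,x;0,1,0;0,0,1] : Matrix (Fin 3) (Fin 3) R)ᵀ = !![1,0,0;0,1,0;x,0,1] := by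
  ext i j
  fin_cases i <;> fin_cases j <;> simp [Matrix.vecHead, Matrix.vecTail]

end helpers

lemma exists_skew (K L : Type*) [Field K] [Field L] [Algebra K L] (σ : L ≃ₐ[K] L)
    [IsGalois K L] (hdeg : Module.finrank K L = 2) (hσ : σ ≠ AlgEquiv.refl) :
    ∃ e : L, e ≠ 0 ∧ σ e = -e := by
  have hfd : FiniteDimensional K L := Module.finite_of_finrank_eq_succ (n := 1) (by rw [hdeg])
  have hcard : Fintype.card (L ≃ₐ[K] L) = 2 := by
    rw [← Nat.card_eq_fintype_card, IsGalois.card_aut_eq_finrank, hdeg]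
  have hsq : ∀ x : L, σ (σ x) = x := by
    intro x
    have h1 : σ ^ 2 = 1 := by
      have h := pow_card_eq_one (G := L ≃ₐ[K] L) (x := σ)
      rwa [hcard] at h
    have := congrArg (fun f : L ≃ₐ[K] L => f x) h1
    simpa [pow_succ, AlgEquiv.mul_apply] using this
  by_cases h2 : (1 : L) + 1 = 0
  · exact ⟨1, one_ne_zero, by rw [_root_.map_one]; linear_combination h2⟩
  · obtain ⟨x, hx⟩ : ∃ x : L, σ x ≠ x := by
      by_contra hc
      push_neg at hc
      exact hσ (AlgEquiv.ext fun x => hc x)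
    exact ⟨x - σ x, sub_ne_zero.mpr (Ne.symm hx), by
      rw [map_sub, hsq]; ring⟩

def Egen {R : Type*} [CommRing R] (x : R) : Matrix.SpecialLinearGroup (Fin 3) R :=
  ⟨!![1,0,x;0,1,0;0,0,1], by simp [Matrix.det_fin_three, Matrix.vecHead, Matrix.vecTail]⟩

def Fgen {R : Type*} [CommRing R] (x : R) : Matrix.SpecialLinearGroup (Fin 3) R :=
  ⟨!![1,0,0;0,1,0;x,0,1], by simp [Matrix.det_fin_three, Matrix.vecHead, Matrix.vecTail]⟩

lemma Egen_mem (x : L ⊗[K] A) (hx : tau K L σ A x = -x) : Egen x ∈ Uplus K L σ A :=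
  ⟨0, x, by rw [hx]; simp, by simp [Egen]⟩

lemma Fgen_mem (x : L ⊗[K] A) (hx : tau K L σ A x = -x) : Fgen x ∈ Uminus K L σ A :=
  ⟨0, x, by rw [hx]; simp, by rw [map_zero, trans_eq]; rfl⟩


/-- For every nonzero `λ ∈ K'`, the diagonal matrix `a_λ = diag(λ, 1, λ⁻¹)` (with `λ`
viewed in `B = L ⊗[K] K'` via the natural map `K' → B`) lies in the subgroup of
`SL₃(B)` generated by `U⁺(K')` and `U⁻(K')`. -/
theorem a_lambda_mem_closure [IsGalois K L] (hdeg : Module.finrank K L = 2)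
    (hσ : σ ≠ AlgEquiv.refl)
    (K' : Type*) [Field K'] [Algebra K K']
    (lam : K') (hlam : lam ≠ 0)
    (M : Matrix.SpecialLinearGroup (Fin 3) (L ⊗[K] K'))
    (hM : (M : Matrix (Fin 3) (Fin 3) (L ⊗[K] K')) =
      !![(Algebra.TensorProduct.includeRight : K' →ₐ[K] L ⊗[K] K') lam, 0, 0;
         0, 1, 0;
         0, 0, (Algebra.TensorProduct.includeRight : K' →ₐ[K] L ⊗[K] K') lam⁻¹]) :
    M ∈ Subgroup.closure (Uplus K L σ K' ∪ Uminus K L σ K') := by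
  obtain ⟨e, he0, heσ⟩ := exists_skew K L σ hdeg hσ
  set B := L ⊗[K] K'
  set t : B := e ⊗ₜ[K] lam with ht
  set t' : B := e⁻¹ ⊗ₜ[K] lam⁻¹ with ht'
  set s : B := e ⊗ₜ[K] (1 : K') with hs
  set s' : B := e⁻¹ ⊗ₜ[K] (1 : K') with hs'
  have htt' : t * t' = 1 := by
    rw [ht, ht', Algebra.TensorProduct.tmul_mul_tmul, mul_inv_cancel₀ he0,
      mul_inv_cancel₀ hlam, ← Algebra.TensorProduct.one_def]
  have hss' : s * s' = 1 := by
    rw [hs, hs', Algebra.TensorProduct.tmul_mul_tmul, mul_inv_cancel₀ he0, one_mul,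
      ← Algebra.TensorProduct.one_def]
  have hσinv : σ e⁻¹ = -e⁻¹ := by
    rw [map_inv₀, heσ, inv_neg]
  have hskew_t : tau K L σ K' t = -t := by
    rw [ht]; show Algebra.TensorProduct.map σ.toAlgHom (AlgHom.id K K') _ = _
    rw [Algebra.TensorProduct.map_tmul]
    show σ e ⊗ₜ[K] _ = _
    rw [heσ, TensorProduct.neg_tmul]; rfl
  have hskew_t' : tau K L σ K' t' = -t' := by
    rw [ht']; show Algebra.TensorProduct.map σ.toAlgHom (AlgHom.id K K') _ = _
    rw [Algebra.TensorProduct.map_tmul]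
    show σ e⁻¹ ⊗ₜ[K] _ = _
    rw [hσinv, TensorProduct.neg_tmul]; rfl
  have hskew_s : tau K L σ K' s = -s := by
    rw [hs]; show Algebra.TensorProduct.map σ.toAlgHom (AlgHom.id K K') _ = _
    rw [Algebra.TensorProduct.map_tmul]
    show σ e ⊗ₜ[K] _ = _
    rw [heσ, TensorProduct.neg_tmul]; rfl
  have hskew_s' : tau K L σ K' s' = -s' := by
    rw [hs']; show Algebra.TensorProduct.map σ.toAlgHom (AlgHom.id K K') _ = _
    rw [Algebra.TensorProduct.map_tmul]
    show σ e⁻¹ ⊗ₜ[K] _ = _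
    rw [hσinv, TensorProduct.neg_tmul]; rfl
  have hMeq : M = Egen t * Fgen (-t') * Egen t * (Egen (-s) * Fgen s' * Egen (-s)) := by
    apply Subtype.ext
    have h1 : (!![0,0,t;0,1,0;-t',0,0] : Matrix (Fin 3) (Fin 3) B) =
        !![1,0,t;0,1,0;0,0,1] * !![1,0,0;0,1,0;-t',0,1] * !![1,0,t;0,1,0;0,0,1] :=
      wfact t t' htt'
    have h2 : (!![0,0,-s;0,1,0;s',0,0] : Matrix (Fin 3) (Fin 3) B) =
        !![1,0,-s;0,1,0;0,0,1] * !![1,0,0;0,1,0;s',0,1] * !![1,0,-s;0,1,0;0,0,1] := by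
      have := wfact (-s) (-s') (by rw [neg_mul_neg]; exact hss')
      rw [neg_neg] at this
      exact this
    have h3 := wmul t t' s s'
    show (M : Matrix (Fin 3) (Fin 3) B) = _
    rw [hM]
    have hts' : t * s' = (Algebra.TensorProduct.includeRight : K' →ₐ[K] B) lam := by
      rw [ht, hs', Algebra.TensorProduct.tmul_mul_tmul, mul_inv_cancel₀ he0, mul_one,
        Algebra.TensorProduct.includeRight_apply]
    have ht's : t' * s = (Algebra.TensorProduct.includeRight : K' →ₐ[K] B) lam⁻¹ := by
      rw [ht', hs, Algebra.TensorProduct.tmul_mul_tmul, inv_mul_cancel₀ he0, mul_one,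
        Algebra.TensorProduct.includeRight_apply]
    have : ((Egen t * Fgen (-t') * Egen t * (Egen (-s) * Fgen s' * Egen (-s)) :
        Matrix.SpecialLinearGroup (Fin 3) B) : Matrix (Fin 3) (Fin 3) B) =
        (!![1,0,t;0,1,0;0,0,1] * !![1,0,0;0,1,0;-t',0,1] * !![1,0,t;0,1,0;0,0,1]) *
        (!![1,0,-s;0,1,0;0,0,1] * !![1,0,0;0,1,0;s',0,1] * !![1,0,-s;0,1,0;0,0,1]) := by
      simp only [Matrix.SpecialLinearGroup.coe_mul, Egen, Fgen]
      rfl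
    rw [this, ← h1, ← h2, h3, ← hts', ← ht's]
  rw [hMeq]
  have hcl : ∀ x : B, tau K L σ K' x = -x →
      Egen x ∈ Subgroup.closure (Uplus K L σ K' ∪ Uminus K L σ K') := fun x hx =>
    Subgroup.subset_closure (Set.mem_union_left _ (Egen_mem K L σ K' x hx))
  have hclF : ∀ x : B, tau K L σ K' x = -x →
      Fgen x ∈ Subgroup.closure (Uplus K L σ K' ∪ Uminus K L σ K') := fun x hx =>
    Subgroup.subset_closure (Set.mem_union_right _ (Fgen_mem K L σ K' x hx))
  have hnt' : tau K L σ K' (-t') = -(-t') := by rw [map_neg, hskew_t']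
  have hns : tau K L σ K' (-s) = -(-s) := by rw [map_neg, hskew_s]
  exact mul_mem (mul_mem (mul_mem (hcl t hskew_t) (hclF (-t') hnt')) (hcl t hskew_t))
    (mul_mem (mul_mem (hcl (-s) hns) (hclF s' hskew_s')) (hcl (-s) hns))
end
end

section
/- Let A be a commutative K-algebra and I an ideal of A with I² = 0, and let J ⊆ B = L ⊗_K A denote the ideal generated by the image of I, so J² = 0 and τ(J) = J. Then for every x ∈ J, the diagonal matrix diag(1+x, 1−x+τ(x), 1−τ(x)) lies in the subgroup of SL₃(B) generated by U⁺(A) and U⁻(A); consequently every element diag(y, y⁻¹·τ(y), τ(y)⁻¹) of T(A) with y ∈ 1 + J lies in this subgroup. -/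
open Matrix
open scoped TensorProduct

noncomputable section
set_option maxHeartbeats 3000000

lemma det_upper3 {R : Type*} [CommRing R] (u w v : R) :
    (!![1, u, w; 0, 1, v; 0, 0, 1] : Matrix (Fin 3) (Fin 3) R).det = 1 := by
  simp [Matrix.det_fin_three, Matrix.vecHead, Matrix.vecTail]

lemma det_lower3 {R : Type*} [CommRing R] (u w v : R) :
    (!![1, 0, 0; u, 1, 0; w, v, 1] : Matrix (Fin 3) (Fin 3) R).det = 1 := by
  simp [Matrix.det_fin_three, Matrix.vecHead, Matrix.vecTail]

lemma transpose_upper3 {R : Type*} [CommRing R] (u w v : R) :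
    (!![1, u, w; 0, 1, v; 0, 0, 1] : Matrix (Fin 3) (Fin 3) R)ᵀ = !![1, 0, 0; u, 1, 0; w, v, 1] := by
  ext i j
  fin_cases i <;> fin_cases j <;> rfl

set_option maxHeartbeats 2000000 in
lemma aux_prod {R : Type*} [CommRing R] (a b ai bi x y : R)
    (hab : a + b = 1) (ha : a * ai = 1) (hb : b * bi = 1)
    (hxx : x * x = 0) (hxy : x * y = 0) (hyy : y * y = 0) :
    (!![1, 0, 0; -ai, 1, 0; bi, -bi, 1] : Matrix (Fin 3) (Fin 3) R) *
      !![1, 1, a; 0, 1, 1; 0, 0, 1] *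
      !![1, 0, 0; -bi, 1, 0; bi, -ai, 1] *
      !![1, 0, 0; -(bi * (1 + a * y)), 1, 0; ai * (1 + x), -(ai * (1 + b * x)), 1] *
      !![1, 1 - a * x, b - b * y; 0, 1, 1 - b * y; 0, 0, 1] *
      !![1, 0, 0; -(ai * (1 + x - b * y)), 1, 0; ai * (1 + x), -(bi * (1 + y - a * x)), 1] =
    !![1 + x, 0, 0; 0, 1 - x + y, 0; 0, 0, 1 - y] := by
  ext i j
  fin_cases i <;> fin_cases j <;>
    simp [Matrix.mul_apply, Fin.sum_univ_three, Matrix.vecHead, Matrix.vecTail]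
  · linear_combination (ai + ai*x + (-2)*ai*x*y + (-2)*ai*bi + (-2)*ai*bi*x + (2)*ai*bi*x*y - a*ai*x*y + a*ai*bi - a*ai*bi*y + a*ai*bi*x + a*ai*bi*x*y^2 + a*ai^2 + (2)*a*ai^2*x + a*ai^2*x*y + a*ai^2*x^2 + a*ai^2*bi + a*ai^2*bi*x - a*ai^2*bi*x*y + a*b*ai^2*x^2*y - a^2*ai*bi*x*y + a^2*ai*bi*x*y^2 - a^2*ai^2*x*y + (-2)*a^2*ai^2*x^2*y + a^2*ai^2*bi*y - a^2*ai^2*bi*x*y^2 - a^3*ai^2*bi*x*y^2) * hab + (x + (2)*bi - a*bi + a*bi*y - a*ai - a*ai*x - a*ai*bi - a^2*ai*bi*y) * ha + (a*ai + (-2)*a*ai*bi + a^2*ai*bi - a^2*ai*bi*y + a^2*ai^2 + (-2)*a^2*ai^2*y + a^2*ai^2*x + a^2*ai^2*bi + (2)*a^3*ai^2*y + a^3*ai^2*bi*y) * hxx + ((-2)*ai + (2)*ai*bi + a*ai - a*ai*bi + a*ai*bi*y + a*ai^2 - a*ai^2*bi + a^2*ai + (-2)*a^2*ai*bi + (-2)*a^2*ai^2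 - a^2*ai^2*bi*y + a^3*ai*bi - a^3*ai*bi*y + a^3*ai^2 + a^3*ai^2*bi + a^4*ai^2*bi*y) * hxy
  · linear_combination (bi*y + (2)*bi*y^2 + bi^2 + (-2)*bi^2*y^2 + (-2)*a*bi*x*y + a*bi^2*y + a*bi^2*y^2 - a*bi^2*y^3 - a*bi^2*x + (2)*a*bi^2*x*y - a*ai*x - a*ai*bi + (-2)*a*ai*bi*y - a*ai*bi*y^2 - a*ai*bi^2 + a*ai*bi^2*y^2 - a*b*ai*bi*x*y - a*b*ai*bi*x*y^2 + (-2)*a^2*bi^2*x*y + a^2*bi^2*x*y^2 + a^2*ai*bi*x + (2)*a^2*ai*bi*x*y + a^2*ai*bi*x*y^2 - a^2*ai*bi^2*y + a^2*ai*bi^2*y^3 + a^2*ai*bi^2*x - a^2*ai*bi^2*x*y + a^2*b*ai*bi*x^2*y - a^3*ai*bi*x^2*y + a^3*ai*bi^2*x*y - a^3*ai*bi^2*x*y^2) * hab + ((-1) + (2)*bi - bi^2 + a*bi + (3)*a*bi*y + (-2)*a*bi*x + a*bi^2 - a*bi^2*y + a*bi^2*x - a^2*bi*x + a^2*bi^2*y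 - a^2*bi^2*x) * ha + ((-1) + bi + a*x - a*bi - a*bi*x + a^2*bi*x) * hb + (-a^2*ai - a^3*ai*bi*y + a^4*ai*bi*y) * hxx + ((-2)*a*bi + (2)*a*bi^2 + (3)*a^2*bi + (-4)*a^2*bi^2 + a^2*bi^2*y + (2)*a^2*ai*bi + a^2*ai*bi*y - a^2*ai*bi^2 + (2)*a^3*bi^2 - a^3*bi^2*y + (-3)*a^3*ai*bi - a^3*ai*bi*y + (2)*a^3*ai*bi^2 - a^3*ai*bi^2*y - a^4*ai*bi^2 + a^4*ai*bi^2*y) * hxy + ((2)*bi + (-2)*bi^2 + (-2)*a*bi + (3)*a*bi^2 - a*bi^2*y - a*ai*bi + a*ai*bi^2 - a^2*bi^2 + a^2*bi^2*y + a^2*ai*bi - a^2*ai*bi^2 + a^2*ai*bi^2*y - a^3*ai*bi^2*y) * hyy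
  · linear_combination ((1) + (-2)*y - bi + bi*y - a*bi*y + a*bi*y^2 + a*ai + a*ai*y + a*ai*bi - a*ai*bi*y + a*b*ai*x*y - a^2*ai*x*y + a^2*ai*bi*y - a^2*ai*bi*y^2) * hab + ((-1) + y + bi - bi*y - a - a*y - a*bi + (2)*a*bi*y - a^2*bi*y) * ha + ((-1) + y + a - a*y) * hb + (-a^2*ai + a^3*ai) * hxy + (a*bi - a^2*bi - a^2*ai*bi + a^3*ai*bi) * hyy
  · linear_combination (-ai*x*y - ai*bi - ai*bi*x + ai*bi*x*y + ai^2*x + (3)*ai^2*x*y + ai^2*x^2 + (3)*ai^2*bi + (3)*ai^2*bi*x + (-3)*ai^2*bi*x*y + b*ai^2*x^2*y - a*ai*bi*y + a*ai*bi*x*y^2 + (-2)*a*ai^2*x^2*y - a*ai^2*bi + (2)*a*ai^2*bi*y - a*ai^2*bi*x + (-2)*a*ai^2*bi*x*y^2 - a*ai^3 + (-2)*a*ai^3*x - a*ai^3*x*y - a*ai^3*x^2 - a*ai^3*bi - a*ai^3*bi*x + a*ai^3*bi*x*y - a*b*ai^3*x^2*y + a^2*ai*bi*x*y^2 + a^2*ai^2*bi*x*y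 + (-2)*a^2*ai^2*bi*x*y^2 + a^2*ai^3*x*y + (2)*a^2*ai^3*x^2*y - a^2*ai^3*bi*y + a^2*ai^3*bi*x*y^2 + a^3*ai^3*bi*x*y^2) * hab + (bi - ai + (-2)*ai*x + (-3)*ai*bi + a*bi*y + a*ai*bi + (-2)*a*ai*bi*y + a*ai^2 + a*ai^2*x + a*ai^2*bi + a^2*ai^2*bi*y) * ha + (-a*ai*bi + (-2)*a*ai^2*y + a*ai^2*x + (3)*a*ai^2*bi - a^2*ai*bi*y + (2)*a^2*ai^2*y - a^2*ai^2*bi + (2)*a^2*ai^2*bi*y - a^2*ai^3 + (2)*a^2*ai^3*y - a^2*ai^3*x - a^2*ai^3*bi + (-2)*a^3*ai^3*y - a^3*ai^3*bi*y) * hxx + (-ai + ai*bi + (3)*ai^2 + (-3)*ai^2*bi + a*ai + a*ai*bi*y + (-3)*a*ai^2 + a*ai^2*bi + (-2)*a*ai^2*bi*y - a*ai^3 + a*ai^3*bi - a^2*ai*bi + (3)*a^2*ai^2*bi + (2)*a^2*ai^3 + a^2*ai^3*bi*y - a^3*ai*bi*y - a^3*ai^2*bi + (2)*a^3*ai^2*bi*y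 - a^3*ai^3 - a^3*ai^3*bi - a^4*ai^3*bi*y) * hxy
  · linear_combination (bi*y^2 + (2)*bi*x - bi^2 + bi^2*y - bi^2*y^2 + (-2)*bi^2*x - ai*x + (-2)*ai*bi + (-3)*ai*bi*y + (-3)*ai*bi*y^2 - ai*bi^2 + (3)*ai*bi^2*y^2 - b*ai*bi*x*y - b*ai*bi*x*y^2 - a*bi*x*y - a*bi^2*y^3 + a*bi^2*x + a*bi^2*x*y + (4)*a*ai*bi*x*y + a*ai*bi*x*y^2 + a*ai*bi^2 + (-2)*a*ai*bi^2*y - a*ai*bi^2*y^2 + (2)*a*ai*bi^2*y^3 + (3)*a*ai*bi^2*x + (-3)*a*ai*bi^2*x*y + a*ai^2*x + a*ai^2*bi + (2)*a*ai^2*bi*y + a*ai^2*bi*y^2 + a*ai^2*bi^2 - a*ai^2*bi^2*y^2 + a*b*ai*bi*x^2*y + a*b*ai^2*bi*x*y + a*b*ai^2*bi*x*y^2 - a^2*bi^2*x*y + a^2*bi^2*x*y^2 - a^2*ai*bi*x^2*y - a^2*ai*bi^2*x + (3)*a^2*ai*bi^2*x*y + (-2)*a^2*ai*bi^2*x*y^2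 - a^2*ai^2*bi*x + (-2)*a^2*ai^2*bi*x*y - a^2*ai^2*bi*x*y^2 + a^2*ai^2*bi^2*y - a^2*ai^2*bi^2*y^3 - a^2*ai^2*bi^2*x + a^2*ai^2*bi^2*x*y - a^2*b*ai^2*bi*x^2*y + a^3*ai^2*bi*x^2*y - a^3*ai^2*bi^2*x*y + a^3*ai^2*bi^2*x*y^2) * hab + (x + bi + (3)*bi*y + (-4)*bi*x + bi^2 - bi^2*y + (2)*bi^2*x + ai + (-2)*ai*bi + ai*bi^2 + a*bi*x - a*bi^2 + a*bi^2*y + (-3)*a*bi^2*x - a*ai*bi + (-3)*a*ai*bi*y + (2)*a*ai*bi*x - a*ai*bi^2 + a*ai*bi^2*y - a*ai*bi^2*x + a^2*bi^2*x + a^2*ai*bi*x - a^2*ai*bi^2*y + a^2*ai*bi^2*x) * ha + (y + (-2)*x + (2)*bi - bi*y + (2)*bi*x + (2)*ai + (-2)*ai*bi + a*bi*y + (-2)*a*bi*x) * hb + (-a*ai - a^2*ai*bi*y + a^2*ai^2 + a^3*ai*bi*y + a^3*ai^2*bi*y - a^4*ai^2*bi*y) * hxx + (-a*bi + a*bi^2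 + (4)*a*ai*bi + a*ai*bi*y + (-3)*a*ai*bi^2 + (2)*a^2*bi + (-2)*a^2*bi^2 + a^2*bi^2*y + (-6)*a^2*ai*bi - a^2*ai*bi*y + (6)*a^2*ai*bi^2 + (-2)*a^2*ai*bi^2*y + (-2)*a^2*ai^2*bi - a^2*ai^2*bi*y + a^2*ai^2*bi^2 + a^3*bi^2 - a^3*bi^2*y + (-3)*a^3*ai*bi^2 + (2)*a^3*ai*bi^2*y + (3)*a^3*ai^2*bi + a^3*ai^2*bi*y + (-2)*a^3*ai^2*bi^2 + a^3*ai^2*bi^2*y + a^4*ai^2*bi^2 - a^4*ai^2*bi^2*y) * hxy + (bi - bi^2 + (-3)*ai*bi + (3)*ai*bi^2 - a*bi + a*bi^2 - a*bi^2*y + (3)*a*ai*bi + (-4)*a*ai*bi^2 + (2)*a*ai*bi^2*y + a*ai^2*bi - a*ai^2*bi^2 + a^2*bi^2*y + a^2*ai*bi^2 + (-2)*a^2*ai*bi^2*y - a^2*ai^2*bi + a^2*ai^2*bi^2 - a^2*ai^2*bi^2*y + a^3*ai^2*bi^2*y) * hyy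
  · linear_combination (-y + bi + (-2)*bi*y + (3)*ai*y + ai*bi - ai*bi*y + b*ai*x*y + a*bi*y^2 - a*ai*x*y - a*ai*bi + (3)*a*ai*bi*y + (-2)*a*ai*bi*y^2 - a*ai^2 - a*ai^2*y - a*ai^2*bi + a*ai^2*bi*y - a*b*ai^2*x*y + a^2*ai^2*x*y - a^2*ai^2*bi*y + a^2*ai^2*bi*y^2) * hab + ((-2)*y - bi + (2)*bi*y + ai - ai*y - ai*bi + ai*bi*y + a*bi + (-2)*a*bi*y + a*ai + a*ai*y + a*ai*bi + (-2)*a*ai*bi*y + a^2*ai*bi*y) * ha + ((-2) + (3)*y + (2)*ai + (-2)*ai*y - a*y) * hb + (-a*ai + a^2*ai + a^2*ai^2 - a^3*ai^2) * hxy + (a*bi + (-2)*a*ai*bi - a^2*bi + (2)*a^2*ai*bi + a^2*ai^2*bi - a^3*ai^2*bi) * hyy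
  · linear_combination ((3)*ai*bi + (3)*ai*bi*x + (-2)*ai*bi*x*y - ai*bi^2 - ai*bi^2*x + ai*bi^2*x*y + ai^2 + (2)*ai^2*x + ai^2*x*y + ai^2*x^2 - ai^2*bi*x + (-2)*ai^2*bi*x*y - ai^2*bi*x^2 - ai^2*bi^2 - ai^2*bi^2*x + ai^2*bi^2*x*y + b*ai^2*x^2*y - b*ai^2*bi*x^2*y + (-2)*a*ai*bi*x*y + a*ai*bi^2 + a*ai*bi^2*x - a*ai^2*x*y + (-2)*a*ai^2*x^2*y + a*ai^2*bi + a*ai^2*bi*y + (2)*a*ai^2*bi*x + (2)*a*ai^2*bi*x*y - a*ai^2*bi*x*y^2 + a*ai^2*bi*x^2 + (2)*a*ai^2*bi*x^2*y + a*ai^2*bi^2 - a*ai^2*bi^2*y + a*ai^2*bi^2*x - a*ai^2*bi^2*x*y + a*ai^2*bi^2*x*y^2 + a*b*ai^2*bi*x^2*y - a^2*ai*bi^2*x*y - a^2*ai^2*bi*x*y - a^2*ai^2*bi*x*y^2 + (-2)*a^2*ai^2*bi*x^2*y + a^2*ai^2*bi^2*y - a^3*ai^2*bi^2*x*y^2)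 * hab + ((-2)*bi + bi^2 - ai - ai*x + ai*bi*x + ai*bi^2 - a*bi^2 - a*ai*bi - a*ai*bi*y - a*ai*bi*x - a*ai*bi^2 + a*ai*bi^2*y - a^2*ai*bi^2*y) * ha + (-ai - ai*x) * hb + ((2)*a*ai*bi - a*ai*bi^2 + a*ai^2 + (-2)*a*ai^2*y + a*ai^2*x + (2)*a*ai^2*bi*y - a*ai^2*bi*x - a*ai^2*bi^2 + a^2*ai*bi^2 + (2)*a^2*ai^2*y + a^2*ai^2*bi + (-3)*a^2*ai^2*bi*y + a^2*ai^2*bi*x + a^2*ai^2*bi^2 - a^2*ai^2*bi^2*y + (2)*a^3*ai^2*bi*y + a^3*ai^2*bi^2*y) * hxx + ((-2)*ai*bi + ai*bi^2 + ai^2 + (-2)*ai^2*bi + ai^2*bi^2 - a*ai*bi^2 + (-2)*a*ai^2 + (3)*a*ai^2*bi - a*ai^2*bi*y - a*ai^2*bi^2 + a*ai^2*bi^2*y + (2)*a^2*ai*bi - a^2*ai*bi^2 + a^2*ai^2 + (-2)*a^2*ai^2*bi - a^2*ai^2*bi^2 - a^2*ai^2*bi^2*y + a^3*ai*bi^2 +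 a^3*ai^2*bi + a^3*ai^2*bi*y + a^3*ai^2*bi^2 - a^3*ai^2*bi^2*y + a^4*ai^2*bi^2*y) * hxy
  · linear_combination ((2)*bi^2*y + (2)*bi^2*y^2 + (-2)*bi^2*x + bi^3 - bi^3*y - bi^3*y^2 + bi^3*x - ai*x + (-2)*ai*bi + (-2)*ai*bi*y - ai*bi*y^2 + ai*bi*x + (2)*ai*bi^2 + (2)*ai*bi^2*y + (2)*ai*bi^2*y^2 - ai*bi^3*y^2 - b*ai*bi*x*y - b*ai*bi*x*y^2 + b*ai*bi^2*x*y + b*ai*bi^2*x*y^2 + (-2)*a*bi^2*x*y + a*bi^3*y + a*bi^3*y^2 - a*bi^3*x + a*bi^3*x*y + (2)*a*ai*bi*x*y + a*ai*bi*x*y^2 - a*ai*bi^2 + (-3)*a*ai*bi^2*y - a*ai*bi^2*y^2 + a*ai*bi^2*y^3 + (-3)*a*ai*bi^2*x*y - a*ai*bi^2*x*y^2 - a*ai*bi^3 + a*ai*bi^3*y + a*ai*bi^3*y^2 - a*ai*bi^3*y^3 - a*ai*bi^3*x + a*ai*bi^3*x*y + a*b*ai*bi*x^2*y - a*b*ai*bi^2*x*y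 - a*b*ai*bi^2*x*y^2 - a*b*ai*bi^2*x^2*y - a^2*bi^3*x*y - a^2*ai*bi*x^2*y + a^2*ai*bi^2*x + (3)*a^2*ai*bi^2*x*y + a^2*ai*bi^2*x^2*y - a^2*ai*bi^3*y + a^2*ai*bi^3*y^3 + a^2*ai*bi^3*x + (-2)*a^2*ai*bi^3*x*y + a^2*ai*bi^3*x*y^2 + a^2*b*ai*bi^2*x^2*y - a^3*ai*bi^2*x^2*y + a^3*ai*bi^3*x*y - a^3*ai*bi^3*x*y^2) * hab + (bi + (3)*bi*y + (-2)*bi*x + (-4)*bi^2*y + (3)*bi^2*x - bi^3 + bi^3*y - bi^3*x - a*bi*x + a*bi^2 + (4)*a*bi^2*y + (-2)*a*bi^2*x + a*bi^3 + (-2)*a*bi^3*y + (2)*a*bi^3*x - a^2*bi^2*x + a^2*bi^3*y - a^2*bi^3*x) * ha + ((-2)*bi + (-2)*bi*y + (2)*bi*x + bi^2*y - bi^2*x + ai + (-2)*ai*bi + ai*bi^2 + (2)*a*bi*x - a*bi^2 - a*bi^2*y + a^2*bi^2*x) * hb + (-a*ai + a*ai*bi - a^2*ai*bi - a^2*ai*bi*y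 + a^2*ai*bi^2*y + a^3*ai*bi*y + (-2)*a^3*ai*bi^2*y + a^4*ai*bi^2*y) * hxx + ((-2)*a*bi^2 + a*bi^3 + (2)*a*ai*bi + a*ai*bi*y + (-3)*a*ai*bi^2 - a*ai*bi^2*y + a*ai*bi^3 + (2)*a^2*bi^2 + (-2)*a^2*bi^3 + (-3)*a^2*ai*bi - a^2*ai*bi*y + (7)*a^2*ai*bi^2 + a^2*ai*bi^2*y + (-3)*a^2*ai*bi^3 + a^2*ai*bi^3*y + a^3*bi^3 + (-4)*a^3*ai*bi^2 + (3)*a^3*ai*bi^3 + (-2)*a^3*ai*bi^3*y - a^4*ai*bi^3 + a^4*ai*bi^3*y) * hxy + ((2)*bi^2 - bi^3 - ai*bi + (2)*ai*bi^2 - ai*bi^3 + (-2)*a*bi^2 + (2)*a*bi^3 + a*ai*bi + (-3)*a*ai*bi^2 + a*ai*bi^2*y + (2)*a*ai*bi^3 - a*ai*bi^3*y - a^2*bi^3 + a^2*ai*bi^2 - a^2*ai*bi^2*y - a^2*ai*bi^3 + (2)*a^2*ai*bi^3*y - a^3*ai*bi^3*y) * hyy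
  · linear_combination (bi + (-2)*bi*y - bi^2 + (2)*bi^2*y + ai + ai*y - ai*bi - ai*bi*y + b*ai*x*y - b*ai*bi*x*y - a*bi^2*y - a*ai*x*y + a*ai*bi + (2)*a*ai*bi*y - a*ai*bi*y^2 + a*ai*bi*x*y + a*ai*bi^2 + (-2)*a*ai*bi^2*y + a*ai*bi^2*y^2 + a*b*ai*bi*x*y - a^2*ai*bi*x*y + a^2*ai*bi^2*y - a^2*ai*bi^2*y^2) * hab + ((-1) - y + (3)*bi*y + bi^2 + (-2)*bi^2*y - a*bi + (-2)*a*bi*y - a*bi^2 + (3)*a*bi^2*y - a^2*bi^2*y) * ha + ((1) - bi*y + ai - ai*y - ai*bi + ai*bi*y + a*bi) * hb + (-a*ai + a*ai*bi + a^2*ai + (-2)*a^2*ai*bi + a^3*ai*bi) * hxy + (-a*ai*bi + a*ai*bi^2 + a^2*ai*bi + (-2)*a^2*ai*bi^2 + a^3*ai*bi^2) * hyy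

variable (K L : Type*) [Field K] [Field L] [Algebra K L] (σ : L ≃ₐ[K] L)
variable (A : Type*) [CommRing A] [Algebra K A]

/-- Let `I` be an ideal of `A` with `I² = 0`, and let `J ⊆ B = L ⊗[K] A` be the ideal
generated by the image of `I`. Then for every `x ∈ J`, the diagonal matrix
`diag(1+x, 1−x+τ(x), 1−τ(x))` lies in the subgroup of `SL₃(B)` generated by `U⁺(A)`
and `U⁻(A)`; consequently every element `diag(y, y⁻¹·τ(y), τ(y)⁻¹)` of `T(A)` with
`y ∈ 1 + J` lies in this subgroup. -/
theorem squareZero_torus_mem_closure [IsGalois K L] (hdeg : Module.finrank K L = 2)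
    (hσ : σ ≠ AlgEquiv.refl)
    (I : Ideal A) (hI : I ^ 2 = ⊥) :
    (∀ x ∈ Ideal.map
        (Algebra.TensorProduct.includeRight : A →ₐ[K] L ⊗[K] A).toRingHom I,
      ∀ M : Matrix.SpecialLinearGroup (Fin 3) (L ⊗[K] A),
        (M : Matrix (Fin 3) (Fin 3) (L ⊗[K] A)) =
          !![1 + x, 0, 0;
             0, 1 - x + tau K L σ A x, 0;
             0, 0, 1 - tau K L σ A x] →
        M ∈ Subgroup.closure (Uplus K L σ A ∪ Uminus K L σ A)) ∧
    (∀ y : (L ⊗[K] A)ˣ,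
      (y : L ⊗[K] A) - 1 ∈ Ideal.map
        (Algebra.TensorProduct.includeRight : A →ₐ[K] L ⊗[K] A).toRingHom I →
      ∀ M : Matrix.SpecialLinearGroup (Fin 3) (L ⊗[K] A),
        (M : Matrix (Fin 3) (Fin 3) (L ⊗[K] A)) =
          !![(y : L ⊗[K] A), 0, 0;
             0, ((y⁻¹ : (L ⊗[K] A)ˣ) : L ⊗[K] A) * tau K L σ A (y : L ⊗[K] A), 0;
             0, 0, tau K L σ A ((y⁻¹ : (L ⊗[K] A)ˣ) : L ⊗[K] A)] →
        M ∈ Subgroup.closure (Uplus K L σ A ∪ Uminus K L σ A)) := by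
  classical
  -- basic setup
  haveI hFD : FiniteDimensional K L := FiniteDimensional.of_finrank_pos (by rw [hdeg]; norm_num)
  have hσ2 : ∀ l : L, σ (σ l) = l := by
    intro l
    have h2 : σ ^ 2 = 1 := by
      have hc : Fintype.card (L ≃ₐ[K] L) = 2 := by
        rw [Fintype.card_eq_nat_card, IsGalois.card_aut_eq_finrank, hdeg]
      rw [← hc]
      exact pow_card_eq_one
    have h3 : (σ ^ 2) l = l := by rw [h2]; rfl
    rwa [pow_two, AlgEquiv.mul_apply] at h3
  have htl : ∀ l : L, tau K L σ A ((Algebra.TensorProduct.includeLeft : L →ₐ[K] L ⊗[K] A) l)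
      = (Algebra.TensorProduct.includeLeft : L →ₐ[K] L ⊗[K] A) (σ l) := by
    intro l
    simp [tau, Algebra.TensorProduct.includeLeft_apply]
  have htt : ∀ z : L ⊗[K] A, tau K L σ A (tau K L σ A z) = z := by
    intro z
    induction z using TensorProduct.induction_on with
    | zero => simp
    | tmul l c => simp [tau, hσ2 l]
    | add u v hu hv => rw [_root_.map_add, _root_.map_add, hu, hv]
  have htr : ∀ c : A, tau K L σ A ((Algebra.TensorProduct.includeRight : A →ₐ[K] L ⊗[K] A) c)
      = (Algebra.TensorProduct.includeRight : A →ₐ[K] L ⊗[K] A) c := by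
    intro c
    simp [tau, Algebra.TensorProduct.includeRight_apply]
  set J : Ideal (L ⊗[K] A) :=
    Ideal.map (Algebra.TensorProduct.includeRight : A →ₐ[K] L ⊗[K] A).toRingHom I with hJdef
  have hJtau : ∀ z ∈ J, tau K L σ A z ∈ J := by
    intro z hz
    have h1 : tau K L σ A z ∈ Ideal.map (tau K L σ A).toRingHom J :=
      Ideal.mem_map_of_mem _ hz
    rw [hJdef, Ideal.map_map] at h1
    have h2 : (tau K L σ A).toRingHom.comp
        (Algebra.TensorProduct.includeRight : A →ₐ[K] L ⊗[K] A).toRingHom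
        = (Algebra.TensorProduct.includeRight : A →ₐ[K] L ⊗[K] A).toRingHom :=
      RingHom.ext fun c => htr c
    rw [h2] at h1
    exact h1
  have hJ0 : ∀ z w : L ⊗[K] A, z ∈ J → w ∈ J → z * w = 0 := by
    intro z w hz hw
    have h1 : z * w ∈ J * J := Ideal.mul_mem_mul hz hw
    have h2 : J * J = ⊥ := by
      rw [← pow_two, hJdef, ← Ideal.map_pow, hI, Ideal.map_bot]
    rw [h2] at h1
    exact Ideal.mem_bot.mp h1
  -- construct θ with θ + σθ = 1
  obtain ⟨α, hα⟩ : ∃ α : L, σ α ≠ α := by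
    by_contra h
    push_neg at h
    exact hσ (AlgEquiv.ext fun l => by simpa using h l)
  have hd : α - σ α ≠ 0 := sub_ne_zero.mpr (Ne.symm hα)
  set θ : L := α * (α - σ α)⁻¹ with hθdef
  have hσθ : σ θ = -(σ α * (α - σ α)⁻¹) := by
    rw [hθdef, _root_.map_mul, _root_.map_inv₀, _root_.map_sub, hσ2 α,
      show σ α - α = -(α - σ α) by ring, inv_neg, mul_neg]
  have hsum : θ + σ θ = 1 := by
    rw [hσθ, hθdef, ← sub_eq_add_neg, ← sub_mul, mul_inv_cancel₀ hd]
  have hα0 : α ≠ 0 := fun h0 => hα (by rw [h0, _root_.map_zero])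
  have hθ0 : θ ≠ 0 := mul_ne_zero hα0 (inv_ne_zero hd)
  have hσθ0 : σ θ ≠ 0 := fun h0 => hθ0 (σ.injective (h0.trans (map_zero σ).symm))
  -- elements of B
  set a : L ⊗[K] A := (Algebra.TensorProduct.includeLeft : L →ₐ[K] L ⊗[K] A) θ with hadef
  set b : L ⊗[K] A := (Algebra.TensorProduct.includeLeft : L →ₐ[K] L ⊗[K] A) (σ θ) with hbdef
  set ai : L ⊗[K] A := (Algebra.TensorProduct.includeLeft : L →ₐ[K] L ⊗[K] A) θ⁻¹ with haidef
  set bi : L ⊗[K] A := (Algebra.TensorProduct.includeLeft : L →ₐ[K] L ⊗[K] A) (σ θ)⁻¹ with hbidef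
  have hab : a + b = 1 := by rw [hadef, hbdef, ← _root_.map_add, hsum, _root_.map_one]
  have ha : a * ai = 1 := by rw [hadef, haidef, ← _root_.map_mul, mul_inv_cancel₀ hθ0, _root_.map_one]
  have hb : b * bi = 1 := by rw [hbdef, hbidef, ← _root_.map_mul, mul_inv_cancel₀ hσθ0, _root_.map_one]
  have htaua : tau K L σ A a = b := htl θ
  have htaub : tau K L σ A b = a := by rw [hbdef, htl, hσ2]
  have htauai : tau K L σ A ai = bi := by rw [haidef, htl, _root_.map_inv₀]
  have htaubi : tau K L σ A bi = ai := by rw [hbidef, htl, _root_.map_inv₀, hσ2]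
  -- main statement for square-zero x
  have key : ∀ x ∈ J, ∀ M : Matrix.SpecialLinearGroup (Fin 3) (L ⊗[K] A),
      (M : Matrix (Fin 3) (Fin 3) (L ⊗[K] A)) =
        !![1 + x, 0, 0;
           0, 1 - x + tau K L σ A x, 0;
           0, 0, 1 - tau K L σ A x] →
      M ∈ Subgroup.closure (Uplus K L σ A ∪ Uminus K L σ A) := by
    intro x hx M hM
    obtain ⟨y, hy⟩ : ∃ y, tau K L σ A x = y := ⟨_, rfl⟩
    have hyJ : y ∈ J := hy ▸ hJtau x hx
    have htauy : tau K L σ A y = x := by rw [← hy, htt]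
    have hxx : x * x = 0 := hJ0 x x hx hx
    have hxy : x * y = 0 := hJ0 x y hx hyJ
    have hyy : y * y = 0 := hJ0 y y hyJ hyJ
    rw [hy] at hM
    set g1 : Matrix.SpecialLinearGroup (Fin 3) (L ⊗[K] A) :=
      ⟨!![1, 0, 0; -ai, 1, 0; bi, -bi, 1], det_lower3 _ _ _⟩ with hg1
    set g2 : Matrix.SpecialLinearGroup (Fin 3) (L ⊗[K] A) :=
      ⟨!![1, 1, a; 0, 1, 1; 0, 0, 1], det_upper3 _ _ _⟩ with hg2
    set g3 : Matrix.SpecialLinearGroup (Fin 3) (L ⊗[K] A) :=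
      ⟨!![1, 0, 0; -bi, 1, 0; bi, -ai, 1], det_lower3 _ _ _⟩ with hg3
    set g4 : Matrix.SpecialLinearGroup (Fin 3) (L ⊗[K] A) :=
      ⟨!![1, 0, 0; -(bi * (1 + a * y)), 1, 0; ai * (1 + x), -(ai * (1 + b * x)), 1],
        det_lower3 _ _ _⟩ with hg4
    set g5 : Matrix.SpecialLinearGroup (Fin 3) (L ⊗[K] A) :=
      ⟨!![1, 1 - a * x, b - b * y; 0, 1, 1 - b * y; 0, 0, 1], det_upper3 _ _ _⟩ with hg5
    set g6 : Matrix.SpecialLinearGroup (Fin 3) (L ⊗[K] A) :=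
      ⟨!![1, 0, 0; -(ai * (1 + x - b * y)), 1, 0; ai * (1 + x), -(bi * (1 + y - a * x)), 1],
        det_lower3 _ _ _⟩ with hg6
    have hm1 : g1 ∈ Uminus K L σ A := by
      refine ⟨-ai, bi, ?_, ?_⟩
      · rw [htaubi, _root_.map_neg, htauai]
        linear_combination (ai * bi) * hab - bi * ha - ai * hb
      · rw [_root_.map_neg, htauai, transpose_upper3]
    have hm2 : g2 ∈ Uplus K L σ A := by
      refine ⟨1, a, ?_, ?_⟩
      · rw [htaua, _root_.map_one]
        linear_combination hab
      · rw [_root_.map_one]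
    have hm3 : g3 ∈ Uminus K L σ A := by
      refine ⟨-bi, bi, ?_, ?_⟩
      · rw [htaubi, _root_.map_neg, htaubi]
        linear_combination (ai * bi) * hab - bi * ha - ai * hb
      · rw [_root_.map_neg, htaubi, transpose_upper3]
    have hm4 : g4 ∈ Uminus K L σ A := by
      have ht4 : tau K L σ A (-(bi * (1 + a * y))) = -(ai * (1 + b * x)) := by
        rw [_root_.map_neg, _root_.map_mul, _root_.map_add, _root_.map_mul, _root_.map_one, htaubi, htaua, htauy]
      refine ⟨-(bi * (1 + a * y)), ai * (1 + x), ?_, ?_⟩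
      · rw [ht4, _root_.map_mul, _root_.map_add, _root_.map_one, htauai, hy]
        linear_combination (ai*bi - a*ai*bi*x*y) * hab + (-bi - bi*y) * ha +
          (-ai - ai*x) * hb + (-(a*ai*bi) + a^2*ai*bi) * hxy
      · rw [ht4, transpose_upper3]
    have hm5 : g5 ∈ Uplus K L σ A := by
      have ht5 : tau K L σ A (1 - a * x) = 1 - b * y := by
        rw [_root_.map_sub, _root_.map_mul, _root_.map_one, htaua, hy]
      refine ⟨1 - a * x, b - b * y, ?_, ?_⟩
      · rw [ht5, _root_.map_sub, _root_.map_mul, htaub, htauy]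
        linear_combination (1 - a*x*y) * hab + (-a + a^2) * hxy
      · rw [ht5]
    have hm6 : g6 ∈ Uminus K L σ A := by
      have ht6 : tau K L σ A (-(ai * (1 + x - b * y))) = -(bi * (1 + y - a * x)) := by
        rw [_root_.map_neg, _root_.map_mul, _root_.map_sub, _root_.map_add, _root_.map_mul, _root_.map_one, htauai, htaub, htauy, hy]
      refine ⟨-(ai * (1 + x - b * y)), ai * (1 + x), ?_, ?_⟩
      · rw [ht6, _root_.map_mul, _root_.map_add, _root_.map_one, htauai, hy]
        linear_combination (ai*bi + ai*bi*y + ai*bi*y^2 + ai*bi*x - a*ai*bi*x*y) * hab +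
          (-bi - bi*y) * ha + (-ai - ai*x) * hb + (a*ai*bi) * hxx +
          (-(ai*bi) - a*ai*bi + a^2*ai*bi) * hxy + (ai*bi - a*ai*bi) * hyy
      · rw [ht6, transpose_upper3]
    have hc1 := Subgroup.subset_closure (k := Uplus K L σ A ∪ Uminus K L σ A)
      (Set.mem_union_right _ hm1)
    have hc2 := Subgroup.subset_closure (k := Uplus K L σ A ∪ Uminus K L σ A)
      (Set.mem_union_left _ hm2)
    have hc3 := Subgroup.subset_closure (k := Uplus K L σ A ∪ Uminus K L σ A)
      (Set.mem_union_right _ hm3)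
    have hc4 := Subgroup.subset_closure (k := Uplus K L σ A ∪ Uminus K L σ A)
      (Set.mem_union_right _ hm4)
    have hc5 := Subgroup.subset_closure (k := Uplus K L σ A ∪ Uminus K L σ A)
      (Set.mem_union_left _ hm5)
    have hc6 := Subgroup.subset_closure (k := Uplus K L σ A ∪ Uminus K L σ A)
      (Set.mem_union_right _ hm6)
    have hMeq : M = g1 * g2 * g3 * g4 * g5 * g6 := by
      apply Subtype.coe_injective
      simp only [Matrix.SpecialLinearGroup.coe_mul]
      rw [hM]
      exact (aux_prod a b ai bi x y hab ha hb hxx hxy hyy).symm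
    rw [hMeq]
    exact Subgroup.mul_mem _ (Subgroup.mul_mem _ (Subgroup.mul_mem _
      (Subgroup.mul_mem _ (Subgroup.mul_mem _ hc1 hc2) hc3) hc4) hc5) hc6
  refine ⟨key, ?_⟩
  intro y hyJ M hM
  set x : L ⊗[K] A := (y : L ⊗[K] A) - 1 with hxdef
  have hxx : x * x = 0 := hJ0 x x hyJ hyJ
  have hxtx : x * tau K L σ A x = 0 := hJ0 x (tau K L σ A x) hyJ (hJtau x hyJ)
  have e1 : (y : L ⊗[K] A) = 1 + x := by rw [hxdef]; ring
  have h1 : (y : L ⊗[K] A) * (1 - x) = 1 := by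
    rw [e1]; linear_combination -hxx
  have hinv : ((y⁻¹ : (L ⊗[K] A)ˣ) : L ⊗[K] A) = 1 - x :=
    Units.inv_eq_of_mul_eq_one_right h1
  have e2 : ((y⁻¹ : (L ⊗[K] A)ˣ) : L ⊗[K] A) * tau K L σ A (y : L ⊗[K] A)
      = 1 - x + tau K L σ A x := by
    rw [hinv, e1, _root_.map_add, _root_.map_one]
    linear_combination -hxtx
  have e3 : tau K L σ A ((y⁻¹ : (L ⊗[K] A)ˣ) : L ⊗[K] A) = 1 - tau K L σ A x := by
    rw [hinv, _root_.map_sub, _root_.map_one]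
  rw [e2, e3, e1] at hM
  exact key x hyJ M hM
end
end

section
/- Let A be an Artinian local commutative K-algebra. Then every element of T(A) lies in the subgroup of SL₃(L ⊗_K A) generated by U⁺(A) and U⁻(A). (This is the Kneser–Tits-type generation statement for SU₃ over Artinian local coefficient rings; applied with A = R⦅t⦆ for R an Artinian local algebra over an algebraically closed field k and K = k⦅t⦆, it yields Proposition 'Artinian Kneser-Tits for SU₃' of the paper.) -/
open Matrix
open scoped TensorProduct

noncomputable section

variable (K L : Type*) [Field K] [Field L] [Algebra K L] (σ : L ≃ₐ[K] L)
variable (A : Type*) [CommRing A] [Algebra K A]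

/-!
Write `x + τ x` for the trace and `x * τ x` for the norm of `x` in a commutative ring with an
involution `τ`. If the trace of a unit `w` is the norm of some `u`, the antidiagonal Weyl element
`weylElem τ w` is a product of elements of `U⁻`, `U⁺`, `U⁻`, and `T(y) · weylElem τ w` equals
`weylElem τ (y w)`; so `T(w w'⁻¹)` is generated by `U⁺` and `U⁻` whenever the traces of `w` and
`w'` are norms. This gives `T(c) = T((c z) z⁻¹)` for every `τ`-fixed unit `c`, where `τ z = -z`;
then, using the fixed unit `1/2` (or `1` when `2 = 0`), every `T(y)` with trace a norm; and then
every `T(y)` whose trace `c` is a unit, since `c⁻¹ y` has trace `1`. Over an Artinian local `A`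
the `τ`-fixed nonunits of `L ⊗[K] A` are nilpotent, so for `ℓ ∈ L` with `σ ℓ ≠ ℓ` at least one
of `y` and `ℓ y` has unit trace; choosing also `ℓ + σ ℓ ≠ 0` makes the trace of `ℓ` a unit.
-/

open Matrix

namespace SU3

variable {B : Type*} [CommRing B] (τ : B →+* B)

def upperUnipotent : Set (SpecialLinearGroup (Fin 3) B) :=
  {M | ∃ u w : B, w + τ w = u * τ u ∧
    (M : Matrix (Fin 3) (Fin 3) B) = !![1, u, w; 0, 1, τ u; 0, 0, 1]}

def lowerUnipotent : Set (SpecialLinearGroup (Fin 3) B) :=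
  {M | ∃ u w : B, w + τ w = u * τ u ∧
    (M : Matrix (Fin 3) (Fin 3) B) = (!![1, u, w; 0, 1, τ u; 0, 0, 1])ᵀ}

def elementarySubgroup : Subgroup (SpecialLinearGroup (Fin 3) B) :=
  Subgroup.closure (upperUnipotent τ ∪ lowerUnipotent τ)

def upperElem (u w : B) : SpecialLinearGroup (Fin 3) B :=
  ⟨!![1, u, w; 0, 1, τ u; 0, 0, 1], by simp [det_fin_three]⟩

theorem coe_upperElem (u w : B) :
    (upperElem τ u w : Matrix (Fin 3) (Fin 3) B) = !![1, u, w; 0, 1, τ u; 0, 0, 1] :=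
  rfl

theorem map_val_mul_map_val_inv (w : Bˣ) : τ w * τ ↑w⁻¹ = 1 := by
  rw [← map_mul, w.mul_inv, map_one]

theorem map_val_inv_of_fixed {c : Bˣ} (hc : τ c = c) : τ ↑c⁻¹ = ↑c⁻¹ := by
  have hτc := map_val_mul_map_val_inv τ c
  rw [hc] at hτc
  linear_combination ↑c⁻¹ * hτc - τ ↑c⁻¹ * c.mul_inv

theorem exists_unit_fixed_trace_eq_norm (h2 : IsUnit (2 : B) ∨ (2 : B) = 0) :
    ∃ c : Bˣ, τ c = c ∧ ∃ v : B, ↑c + τ ↑c = v * τ v := by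
  rcases h2 with h2 | h2
  · have hfix : τ h2.unit = h2.unit := by rw [h2.unit_spec, map_ofNat]
    refine ⟨h2.unit⁻¹, map_val_inv_of_fixed τ hfix, 1, ?_⟩
    rw [map_val_inv_of_fixed τ hfix, map_one, mul_one, ← two_mul]
    exact h2.mul_val_inv
  · exact ⟨1, by simp, 0, by simpa [one_add_one_eq_two] using h2⟩

def torusHom : Bˣ →* SpecialLinearGroup (Fin 3) B where
  toFun y := ⟨!![(y : B), 0, 0; 0, ↑y⁻¹ * τ y, 0; 0, 0, τ ↑y⁻¹], by
    simpa [det_fin_three] using map_val_mul_map_val_inv τ y⟩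
  map_one' := by
    ext i j
    fin_cases i <;> fin_cases j <;> simp
  map_mul' y z := Subtype.ext <| by
    change _ = (_ : Matrix (Fin 3) (Fin 3) B) * _
    ext i j
    fin_cases i <;> fin_cases j <;> simp [_root_.mul_inv_rev] <;> ring

theorem coe_torusHom (y : Bˣ) :
    (torusHom τ y : Matrix (Fin 3) (Fin 3) B) =
      !![(y : B), 0, 0; 0, ↑y⁻¹ * τ y, 0; 0, 0, τ ↑y⁻¹] :=
  rfl

def weylElem (w : Bˣ) : SpecialLinearGroup (Fin 3) B :=
  ⟨!![0, 0, (w : B); 0, -(τ w * ↑w⁻¹), 0; τ ↑w⁻¹, 0, 0], by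
    simp [det_fin_three]
    linear_combination (τ w * τ ↑w⁻¹) * w.mul_inv + map_val_mul_map_val_inv τ w⟩

theorem coe_weylElem (w : Bˣ) :
    (weylElem τ w : Matrix (Fin 3) (Fin 3) B) =
      !![0, 0, (w : B); 0, -(τ w * ↑w⁻¹), 0; τ ↑w⁻¹, 0, 0] :=
  rfl

theorem torusHom_mul_weylElem (y w : Bˣ) :
    torusHom τ y * weylElem τ w = weylElem τ (y * w) := Subtype.ext <| by
  rw [Matrix.SpecialLinearGroup.coe_mul, coe_torusHom, coe_weylElem, coe_weylElem]
  ext i j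
  fin_cases i <;> fin_cases j <;> simp [_root_.mul_inv_rev] <;> ring

variable {τ}

theorem upperElem_mem {u w : B} (h : w + τ w = u * τ u) :
    upperElem τ u w ∈ elementarySubgroup τ :=
  Subgroup.subset_closure (Or.inl ⟨u, w, h, rfl⟩)

theorem upperElem_transpose_mem {u w : B} (h : w + τ w = u * τ u) :
    (upperElem τ u w).transpose ∈ elementarySubgroup τ :=
  Subgroup.subset_closure (Or.inr ⟨u, w, h, rfl⟩)

theorem weylElem_eq_mul (hτ : Function.Involutive τ) {w : Bˣ} {u : B}
    (h : ↑w + τ ↑w = u * τ u) :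
    weylElem τ w = (upperElem τ (-(τ u * ↑w⁻¹)) (τ ↑w⁻¹)).transpose * upperElem τ u w *
      (upperElem τ (-(τ u * τ ↑w⁻¹)) (τ ↑w⁻¹)).transpose := Subtype.ext <| by
  have hw := w.mul_inv
  have hτw := map_val_mul_map_val_inv τ w
  simp only [Matrix.SpecialLinearGroup.coe_mul, Matrix.SpecialLinearGroup.coe_transpose,
    coe_upperElem, coe_weylElem, map_neg, map_mul, hτ _]
  ext i j
  fin_cases i <;> fin_cases j <;> simp [Matrix.mul_apply, Fin.sum_univ_three] <;> grind

theorem weylElem_mem (hτ : Function.Involutive τ) {w : Bˣ} {u : B}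
    (h : ↑w + τ ↑w = u * τ u) : weylElem τ w ∈ elementarySubgroup τ := by
  have hw := w.mul_inv
  have hτw := map_val_mul_map_val_inv τ w
  rw [weylElem_eq_mul hτ h]
  refine mul_mem (mul_mem (upperElem_transpose_mem ?_) (upperElem_mem h))
    (upperElem_transpose_mem ?_) <;> simp only [map_neg, map_mul, hτ _] <;> grind

theorem torusHom_mul_inv_mem_of_trace_eq_norm (hτ : Function.Involutive τ) {w w' : Bˣ}
    {u u' : B} (h : ↑w + τ ↑w = u * τ u) (h' : ↑w' + τ ↑w' = u' * τ u') :
    torusHom τ (w * w'⁻¹) ∈ elementarySubgroup τ := by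
  have hT : torusHom τ (w * w'⁻¹) = weylElem τ w * (weylElem τ w')⁻¹ := by
    rw [eq_mul_inv_iff_mul_eq, torusHom_mul_weylElem, inv_mul_cancel_right]
  rw [hT]
  exact mul_mem (weylElem_mem hτ h) (inv_mem (weylElem_mem hτ h'))

theorem torusHom_mem_of_fixed (hτ : Function.Involutive τ) {z : Bˣ} (hz : τ z = -z)
    {c : Bˣ} (hc : τ c = c) : torusHom τ c ∈ elementarySubgroup τ := by
  have hmem := torusHom_mul_inv_mem_of_trace_eq_norm hτ (w := c * z) (w' := z) (u := 0)
    (u' := 0) (by simp [hz, hc]) (by simp [hz])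
  rwa [mul_inv_cancel_right] at hmem

theorem torusHom_mem_of_trace_eq_norm (hτ : Function.Involutive τ) {z : Bˣ} (hz : τ z = -z)
    (h2 : IsUnit (2 : B) ∨ (2 : B) = 0) {y : Bˣ} {u : B} (h : ↑y + τ ↑y = u * τ u) :
    torusHom τ y ∈ elementarySubgroup τ := by
  obtain ⟨c, hcfix, v, hc⟩ := exists_unit_fixed_trace_eq_norm τ h2
  have hmem := mul_mem (torusHom_mul_inv_mem_of_trace_eq_norm hτ h hc)
    (torusHom_mem_of_fixed hτ hz hcfix)
  rwa [← map_mul, inv_mul_cancel_right] at hmem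

theorem torusHom_mem_of_isUnit_trace (hτ : Function.Involutive τ) {z : Bˣ} (hz : τ z = -z)
    (h2 : IsUnit (2 : B) ∨ (2 : B) = 0) {y : Bˣ} (hy : IsUnit (↑y + τ ↑y)) :
    torusHom τ y ∈ elementarySubgroup τ := by
  set c := hy.unit
  have hc : (c : B) = ↑y + τ ↑y := hy.unit_spec
  have hcfix : τ c = c := by rw [hc, map_add, hτ, add_comm]
  have hcy : ↑(c⁻¹ * y) + τ ↑(c⁻¹ * y) = 1 * τ 1 := by
    rw [Units.val_mul, map_mul, map_val_inv_of_fixed τ hcfix, ← mul_add, ← hc, map_one,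
      mul_one, c.inv_mul]
  have hmem := mul_mem (torusHom_mem_of_fixed hτ hz hcfix)
    (torusHom_mem_of_trace_eq_norm hτ hz h2 hcy)
  rwa [← map_mul, mul_inv_cancel_left] at hmem

/-- Otherwise both traces are nilpotent, hence so is the unit
`(x - τ x) * τ y = x * (y + τ y) - (x * y + τ (x * y))`. -/
theorem isUnit_trace_or_isUnit_trace_mul [Nontrivial B] (hτ : Function.Involutive τ)
    (hfix : ∀ c, τ c = c → ¬IsUnit c → IsNilpotent c) {x : B} (hx : IsUnit (x - τ x))
    (y : Bˣ) : IsUnit (↑y + τ ↑y) ∨ IsUnit (x * y + τ (x * y)) := by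
  by_contra! ⟨h1, h2⟩
  have n1 : ↑y + τ ↑y ∈ nilradical B := hfix _ (by rw [map_add, hτ, add_comm]) h1
  have n2 : x * y + τ (x * y) ∈ nilradical B := hfix _ (by rw [map_add, hτ, add_comm]) h2
  have key : (x - τ x) * τ y = x * (y + τ y) - (x * y + τ (x * y)) := by
    rw [map_mul]
    ring
  have hnil : IsNilpotent ((x - τ x) * τ y) := key ▸ sub_mem (Ideal.mul_mem_left _ x n1) n2
  exact hnil.not_isUnit (hx.mul (y.isUnit.map τ))

theorem torusHom_mem_elementarySubgroup [Nontrivial B] (hτ : Function.Involutive τ)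
    (h2 : IsUnit (2 : B) ∨ (2 : B) = 0) (hfix : ∀ c, τ c = c → ¬IsUnit c → IsNilpotent c)
    {x : Bˣ} (hx : IsUnit (↑x - τ ↑x)) (hxtr : IsUnit (↑x + τ ↑x)) (y : Bˣ) :
    torusHom τ y ∈ elementarySubgroup τ := by
  have hz : τ hx.unit = -hx.unit := by rw [hx.unit_spec, map_sub, hτ, neg_sub]
  rcases isUnit_trace_or_isUnit_trace_mul hτ hfix hx y with hy | hxy
  · exact torusHom_mem_of_isUnit_trace hτ hz h2 hy
  · have hmem := mul_mem (inv_mem (torusHom_mem_of_isUnit_trace hτ hz h2 hxtr))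
      (torusHom_mem_of_isUnit_trace hτ hz h2 (y := x * y) (by rwa [Units.val_mul]))
    rwa [← map_inv, ← map_mul, inv_mul_cancel_left] at hmem

end SU3

section TensorProduct

variable {K L σ A}

theorem tau_tmul (ℓ : L) (a : A) : tau K L σ A (ℓ ⊗ₜ a) = σ ℓ ⊗ₜ a :=
  rfl

theorem AlgEquiv.apply_apply_eq_self_of_finrank_eq_two [IsGalois K L]
    (hdeg : Module.finrank K L = 2) (ℓ : L) : σ (σ ℓ) = ℓ := by
  have : FiniteDimensional K L := Module.finite_of_finrank_eq_succ hdeg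
  have hsq : σ ^ 2 = 1 := by
    rw [← hdeg, ← IsGalois.card_aut_eq_finrank]
    exact pow_card_eq_one'
  simpa [sq] using congr($hsq ℓ)

theorem tau_involutive [IsGalois K L] (hdeg : Module.finrank K L = 2) :
    Function.Involutive (tau K L σ A) := by
  intro x
  induction x using TensorProduct.induction_on with
  | zero => simp
  | tmul ℓ a => rw [tau_tmul, tau_tmul, AlgEquiv.apply_apply_eq_self_of_finrank_eq_two hdeg]
  | add x y hx hy => rw [map_add, map_add, hx, hy]

theorem AlgEquiv.mem_range_algebraMap_of_apply_eq_self [IsGalois K L]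
    (hdeg : Module.finrank K L = 2) (hσ : σ ≠ AlgEquiv.refl) {ℓ : L} (hℓ : σ ℓ = ℓ) :
    ℓ ∈ Set.range (algebraMap K L) := by
  have : FiniteDimensional K L := Module.finite_of_finrank_eq_succ hdeg
  obtain ⟨ρ, -, hρ⟩ :=
    (Nat.card_eq_two_iff' 1).mp ((IsGalois.card_aut_eq_finrank K L).trans hdeg)
  refine (IsGalois.mem_range_algebraMap_iff_fixed ℓ).mpr fun f => ?_
  by_cases hf : f = 1
  · rw [hf, AlgEquiv.one_apply]
  · rwa [hρ f hf, ← hρ σ hσ]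

theorem AlgEquiv.exists_apply_ne_self_add_ne_zero (hσ : σ ≠ AlgEquiv.refl) :
    ∃ ℓ : L, σ ℓ ≠ ℓ ∧ ℓ + σ ℓ ≠ 0 := by
  obtain ⟨ℓ, hℓ⟩ : ∃ ℓ, σ ℓ ≠ ℓ := by
    by_contra! h
    exact hσ (AlgEquiv.ext h)
  by_cases htr : ℓ + σ ℓ = 0
  · refine ⟨ℓ + 1, by simpa using hℓ, fun h2 => hℓ ?_⟩
    rw [map_add, map_one] at h2
    linear_combination htr - ℓ * (h2 - htr)
  · exact ⟨ℓ, hℓ, htr⟩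

/-- Taking `σ`-invariants commutes with the flat base change `- ⊗[K] A`. -/
theorem mem_range_includeRight_of_tau_eq_self [IsGalois K L] (hdeg : Module.finrank K L = 2)
    (hσ : σ ≠ AlgEquiv.refl) {x : L ⊗[K] A} (hx : tau K L σ A x = x) :
    x ∈ Set.range (Algebra.TensorProduct.includeRight : A →ₐ[K] L ⊗[K] A) := by
  have hexact : Function.Exact (Algebra.linearMap K L)
      (σ.toLinearMap - LinearMap.id (R := K) (M := L)) := by
    intro ℓ
    refine ⟨fun h => σ.mem_range_algebraMap_of_apply_eq_self hdeg hσ (sub_eq_zero.mp h), ?_⟩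
    rintro ⟨k, rfl⟩
    simp
  obtain ⟨t, rfl⟩ := (Module.Flat.rTensor_exact (R := K) A hexact x).mp <| by
    rw [LinearMap.rTensor_sub, LinearMap.rTensor_id, LinearMap.sub_apply, LinearMap.id_apply]
    exact sub_eq_zero.mpr hx
  refine ⟨TensorProduct.lid K A t, ?_⟩
  clear hx
  induction t using TensorProduct.induction_on with
  | zero => simp
  | tmul k a => simp [Algebra.algebraMap_eq_smul_one, TensorProduct.smul_tmul]
  | add s t hs ht => rw [map_add, map_add, map_add, hs, ht]

theorem isNilpotent_of_tau_eq_self [IsGalois K L] (hdeg : Module.finrank K L = 2)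
    (hσ : σ ≠ AlgEquiv.refl) [IsArtinianRing A] [IsLocalRing A] {x : L ⊗[K] A}
    (hx : tau K L σ A x = x) (hunit : ¬IsUnit x) : IsNilpotent x := by
  obtain ⟨a, rfl⟩ := mem_range_includeRight_of_tau_eq_self hdeg hσ hx
  exact (Ring.KrullDimLE.isNilpotent_iff_mem_nonunits.mpr fun ha => hunit (ha.map _)).map _

variable (K) in
theorem isUnit_two_or_two_eq_zero {R : Type*} [Ring R] [Algebra K R] :
    IsUnit (2 : R) ∨ (2 : R) = 0 := by
  rcases eq_or_ne (2 : K) 0 with h | h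
  · right
    simpa only [map_ofNat, map_zero] using congr(algebraMap K R $h)
  · left
    simpa only [map_ofNat] using (IsUnit.mk0 _ h).map (algebraMap K R)

end TensorProduct

/-- Kneser–Tits-type generation statement for `SU₃` over Artinian local coefficient
rings: if `A` is an Artinian local commutative `K`-algebra, then every element of
`T(A)` lies in the subgroup of `SL₃(L ⊗[K] A)` generated by `U⁺(A)` and `U⁻(A)`. -/
theorem artinian_kneserTits_SU3 [IsGalois K L]
    (hdeg : Module.finrank K L = 2) (hσ : σ ≠ AlgEquiv.refl)
    [IsArtinianRing A] [IsLocalRing A] :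
    ∀ M ∈ Torus K L σ A,
      M ∈ Subgroup.closure (Uplus K L σ A ∪ Uminus K L σ A) := by
  rintro M ⟨y, hy⟩
  obtain ⟨ℓ, hℓ, htr⟩ := σ.exists_apply_ne_self_add_ne_zero hσ
  have hunit {m : L} (hm : m ≠ 0) : IsUnit (m ⊗ₜ[K] (1 : A)) :=
    (IsUnit.mk0 m hm).map (Algebra.TensorProduct.includeLeft (S := K))
  have hℓ0 : ℓ ≠ 0 := by
    rintro rfl
    exact hℓ (map_zero σ)
  have hmem := SU3.torusHom_mem_elementarySubgroup (τ := (tau K L σ A).toRingHom)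
    (tau_involutive hdeg) (isUnit_two_or_two_eq_zero K)
    (fun _ => isNilpotent_of_tau_eq_self hdeg hσ) (x := (hunit hℓ0).unit)
    (by simpa [tau_tmul, TensorProduct.sub_tmul] using hunit (sub_ne_zero.mpr hℓ.symm))
    (by simpa [tau_tmul, TensorProduct.add_tmul] using hunit htr) y
  rwa [show M = SU3.torusHom _ y from Subtype.ext hy]
end
end

section
/- Let k be an algebraically closed field and let A and B be reduced commutative k-algebras. Then the tensor product A ⊗_k B is a reduced ring. -/
open scoped TensorProduct

/-- Auxiliary version: the finite type case. -/
theorem aux_tensorProduct_reduced (k : Type*) [Field k] [IsAlgClosed k]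
    (A B : Type*) [CommRing A] [Algebra k A] [IsReduced A] [Algebra.FiniteType k A]
    [CommRing B] [Algebra k B] [IsReduced B] :
    IsReduced (A ⊗[k] B) := by
  constructor
  intro y hy
  let b : Module.Basis (Module.Free.ChooseBasisIndex k B) k B := Module.Free.chooseBasis k B
  let 𝒷 : Module.Basis (Module.Free.ChooseBasisIndex k B) A (A ⊗[k] B) :=
    Algebra.TensorProduct.basis A b
  haveI : IsJacobsonRing A := isJacobsonRing_of_finiteType (A := k) (B := A)
  have hjac : (⊥ : Ideal A).jacobson = ⊥ := by
    rw [← Ideal.radical_eq_jacobson]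
    have : nilradical A = ⊥ := by
      rw [nilradical_eq_zero]; rfl
    simpa [nilradical] using this
  have hrepr : 𝒷.repr y = 0 := by
    ext j
    have hmem : 𝒷.repr y j ∈ (⊥ : Ideal A).jacobson := by
      rw [Ideal.jacobson, Ideal.mem_sInf]
      rintro m ⟨-, hm⟩
      letI := Ideal.Quotient.field m
      haveI : Algebra.FiniteType k (A ⧸ m) :=
        Algebra.FiniteType.of_surjective (Ideal.Quotient.mkₐ k m)
          (Ideal.Quotient.mkₐ_surjective k m)
      haveI : Module.Finite k (A ⧸ m) := finite_of_finite_type_of_isJacobsonRing k (A ⧸ m)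
      haveI : Algebra.IsIntegral k (A ⧸ m) := Algebra.IsIntegral.of_finite k (A ⧸ m)
      have hsurj : Function.Surjective (algebraMap k (A ⧸ m)) :=
        (IsAlgClosed.algebraMap_bijective_of_isIntegral (k := k) (K := A ⧸ m)).2
      let e : k ≃ₐ[k] A ⧸ m :=
        AlgEquiv.ofBijective (Algebra.ofId k (A ⧸ m))
          ⟨(algebraMap k (A ⧸ m)).injective, hsurj⟩
      let φ : A →ₐ[k] k := e.symm.toAlgHom.comp (Ideal.Quotient.mkₐ k m)
      let ψ : A ⊗[k] B →ₐ[k] B :=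
        Algebra.TensorProduct.lift ((Algebra.ofId k B).comp φ) (AlgHom.id k B)
          fun _ _ => Commute.all _ _
      have hψy : ψ y = 0 := ((hy.map ψ).eq_zero)
      have key : Finsupp.linearCombination k b
          (Finsupp.mapRange φ (map_zero φ) (𝒷.repr y)) = 0 := by
        rw [Finsupp.linearCombination_apply, Finsupp.sum_mapRange_index (by simp)]
        have : ((𝒷.repr y).sum fun i c => φ c • b i) = ψ y := by
          conv_rhs => rw [← 𝒷.linearCombination_repr y]
          rw [Finsupp.linearCombination_apply, map_finsuppSum, Finsupp.sum, Finsupp.sum]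
          refine Finset.sum_congr rfl fun i _ => ?_
          rw [show (𝒷.repr y) i • 𝒷 i = ((𝒷.repr y) i) ⊗ₜ[k] (b i) by
            simpa [𝒷] using Algebra.TensorProduct.basis_repr_symm_apply' b ((𝒷.repr y) i) i]
          simp [ψ, Algebra.TensorProduct.lift_tmul, Algebra.smul_def, Algebra.ofId_apply]
        rw [this, hψy]
      have hzero := linearIndependent_iff.mp b.linearIndependent _ key
      have hφ : φ (𝒷.repr y j) = 0 := by
        have := DFunLike.congr_fun hzero j
        simpa [Finsupp.mapRange_apply] using this
      have : Ideal.Quotient.mk m (𝒷.repr y j) = 0 := by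
        have h2 := congrArg e hφ
        simpa [φ, e, map_zero] using h2
      exact Ideal.Quotient.eq_zero_iff_mem.mp this
    rw [hjac] at hmem
    simpa using hmem
  have : y = 0 := by
    have := congrArg 𝒷.repr.symm hrepr
    simpa using this
  exact this

set_option synthInstance.maxHeartbeats 400000 in
/-- Let `k` be an algebraically closed field and let `A` and `B` be reduced
commutative `k`-algebras. Then `A ⊗[k] B` is a reduced ring. -/
theorem tensorProduct_reduced_of_isAlgClosed (k : Type*) [Field k] [IsAlgClosed k]
    (A B : Type*) [CommRing A] [Algebra k A] [IsReduced A]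
    [CommRing B] [Algebra k B] [IsReduced B] :
    IsReduced (A ⊗[k] B) := by
  classical
  constructor
  intro x hx
  obtain ⟨S, rfl⟩ := TensorProduct.exists_finset x
  set s : Finset A := S.image Prod.fst with hs
  let A' : Subalgebra k A := Algebra.adjoin k (s : Set A)
  haveI : Algebra.FiniteType k A' :=
    (Subalgebra.fg_iff_finiteType _).mp (Subalgebra.fg_adjoin_finset s)
  haveI : IsReduced A' := isReduced_of_injective A'.val Subtype.val_injective
  let ι : A' ⊗[k] B →ₐ[k] A ⊗[k] B := Algebra.TensorProduct.map A'.val (AlgHom.id k B)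
  have hlin : ι.toLinearMap = LinearMap.rTensor B (A'.val.toLinearMap) :=
    TensorProduct.ext' fun a b => by simp [ι]
  have hinj : Function.Injective ι := by
    have h := Module.Flat.rTensor_preserves_injective_linearMap (M := B)
      (A'.val.toLinearMap) Subtype.val_injective
    rw [← hlin] at h
    exact h
  let y : A' ⊗[k] B := ∑ p ∈ S.attach,
    (⟨p.1.1, Algebra.subset_adjoin (Finset.mem_coe.mpr
      (Finset.mem_image_of_mem Prod.fst p.2))⟩ : A') ⊗ₜ[k] p.1.2
  have hιy : ι y = ∑ p ∈ S, p.1 ⊗ₜ[k] p.2 := by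
    rw [map_sum]
    rw [← Finset.sum_attach S fun p => p.1 ⊗ₜ[k] p.2]
    exact Finset.sum_congr rfl fun p _ => by simp [ι]
  have hy : IsNilpotent y := by
    obtain ⟨n, hn⟩ := hx
    exact ⟨n, hinj (by rw [map_pow, hιy, hn, map_zero])⟩
  haveI := aux_tensorProduct_reduced k A' B
  rw [← hιy, hy.eq_zero, map_zero]
end
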